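/- arXiv:1504.05978 — 6 statements merged into one kernel-verified Lean document; each statement's English description precedes it below -/
import Mathlib

section
/- Uniform Gronwall lemma: Let τ > 0 be fixed. Suppose Y : [0,∞) → ℝ is nonnegative and locally absolutely continuous (so Y(t) = Y(0) + ∫₀ᵗ Y′(s) ds, where Y′ denotes its almost-everywhere derivative), and suppose β : [0,∞) → ℝ is locally integrable with Y′(t) + β(t)·Y(t) ≤ 0 for almost every t ≥ 0. Assume there is γ > 0 such that liminf_{t→∞} ∫_t^{t+τ} β(s) ds ≥ γ, and that limsup_{t→∞} ∫_t^{t+τ} β⁻(s) ds < ∞, where β⁻(s) = max{−β(s), 0}. Then Y(t) → 0 at an exponential rate as t → ∞; that is, there exist constants C > 0, α > 0 and T ≥ 0 such that Y(t) ≤ C·exp(−α t) for all t ≥ T. -/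
/-!
`Y t · exp (∫₀ᵗ β)` is absolutely continuous with a.e. derivative `(Y' + β Y) exp (∫₀ᵗ β) ≤ 0`,
so `Y t ≤ Y s · exp (-∫ₛᵗ β)`. Past some time `T`, every window of length `τ` adds at least
`γ / 2` to `∫ β`, while a partial window can lower it by at most the bound `M` on `∫ β⁻`;
hence `∫_T^t β ≥ γ (t - T) / (2τ) - γ / 2 - M`, which gives the exponential decay.
-/

open MeasureTheory Filter Set

theorem LipschitzOnWith.comp_absolutelyContinuousOnInterval {X Z : Type*} [PseudoMetricSpace X]
    [PseudoMetricSpace Z] {g : X → Z} {K : NNReal} {s : Set X} {f : ℝ → X} {a b : ℝ}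
    (hg : LipschitzOnWith K g s) (hf : AbsolutelyContinuousOnInterval f a b)
    (hfs : MapsTo f (uIcc a b) s) : AbsolutelyContinuousOnInterval (g ∘ f) a b := by
  unfold AbsolutelyContinuousOnInterval at hf ⊢
  apply squeeze_zero' ?_ ?_ (by simpa using hf.const_mul (K : ℝ))
  · exact Eventually.of_forall fun _ ↦ Finset.sum_nonneg fun _ _ ↦ dist_nonneg
  rw [eventually_inf_principal]
  filter_upwards with ⟨n, I⟩ hnI
  rw [Finset.mul_sum]
  gcongr with i hi
  exact hg.dist_le_mul _ (hfs (hnI.1 i hi).1) _ (hfs (hnI.1 i hi).2)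

theorem ContDiff.comp_absolutelyContinuousOnInterval {g f : ℝ → ℝ} {a b : ℝ}
    (hg : ContDiff ℝ 1 g) (hf : AbsolutelyContinuousOnInterval f a b) :
    AbsolutelyContinuousOnInterval (g ∘ f) a b := by
  obtain ⟨C, hC⟩ := hf.exists_bound
  obtain ⟨K, hK⟩ := hg.contDiffOn.exists_lipschitzOnWith one_ne_zero (convex_Icc (-C) C)
    isCompact_Icc
  exact hK.comp_absolutelyContinuousOnInterval hf fun x hx ↦ abs_le.1 (hC x hx)

theorem le_mul_exp_neg_integral_of_deriv_add_mul_nonpos {Y Y' β : ℝ → ℝ} {a b : ℝ}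
    (hab : a ≤ b) (hY' : IntervalIntegrable Y' volume a b)
    (hβ : IntervalIntegrable β volume a b)
    (hY : ∀ t ∈ Icc a b, Y t = Y a + ∫ s in a..t, Y' s)
    (hODE : ∀ᵐ t, t ∈ Ioc a b → Y' t + β t * Y t ≤ 0) :
    Y b ≤ Y a * Real.exp (-∫ s in a..b, β s) := by
  set F : ℝ → ℝ := fun t ↦ Y a + ∫ s in a..t, Y' s
  set G : ℝ → ℝ := fun t ↦ Real.exp (∫ s in a..t, β s)
  have hF : AbsolutelyContinuousOnInterval F a b :=
    contDiffOn_const.absolutelyContinuousOnInterval.fun_add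
      (hY'.absolutelyContinuousOnInterval_intervalIntegral left_mem_uIcc)
  have hG : AbsolutelyContinuousOnInterval G a b :=
    Real.contDiff_exp.comp_absolutelyContinuousOnInterval
      (hβ.absolutelyContinuousOnInterval_intervalIntegral left_mem_uIcc)
  have hnonpos : ∫ x in a..b, deriv F x * G x + F x * deriv G x ≤ 0 := by
    rw [intervalIntegral.integral_of_le hab]
    refine integral_nonpos_of_ae ((ae_restrict_iff' measurableSet_Ioc).2 ?_)
    filter_upwards [hODE, hY'.ae_hasDerivAt_integral, hβ.ae_hasDerivAt_integral]
      with x hODEx hY'x hβx hx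
    have hxI : x ∈ uIcc a b := Icc_subset_uIcc (Ioc_subset_Icc_self hx)
    have hFx : deriv F x = Y' x :=
      ((hasDerivAt_const x (Y a)).add (hY'x hxI a left_mem_uIcc)).deriv.trans (zero_add _)
    have hGx : deriv G x = G x * β x := (hβx hxI a left_mem_uIcc).exp.deriv
    have hFY : F x = Y x := (hY x (Ioc_subset_Icc_self hx)).symm
    rw [hFx, hGx, hFY, Pi.zero_apply]
    have := mul_nonpos_of_nonpos_of_nonneg (hODEx hx) (Real.exp_pos (∫ s in a..x, β s)).le
    linarith
  have key := hF.integral_deriv_mul_eq_sub hG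
  simp only [F, G, intervalIntegral.integral_same, add_zero, Real.exp_zero, mul_one,
    ← hY b ⟨hab, le_rfl⟩] at key
  rw [Real.exp_neg, ← div_eq_mul_inv, le_div_iff₀ (Real.exp_pos _)]
  linarith

theorem intervalIntegrable_of_forall_integrableOn_Icc {f : ℝ → ℝ} {a s t : ℝ}
    (hf : ∀ T, IntegrableOn f (Icc a T)) (hs : a ≤ s) (ht : a ≤ t) :
    IntervalIntegrable f volume s t :=
  ((hf (max s t)).mono_set
    (uIcc_subset_Icc ⟨hs, le_max_left s t⟩ ⟨ht, le_max_right s t⟩)).intervalIntegrable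

theorem le_mul_exp_neg_integral_of_deriv_add_mul_nonpos_Ici {Y Y' β : ℝ → ℝ}
    (hY' : ∀ T, IntegrableOn Y' (Icc 0 T))
    (hY : ∀ t, 0 ≤ t → Y t = Y 0 + ∫ s in (0 : ℝ)..t, Y' s)
    (hβ : ∀ T, IntegrableOn β (Icc 0 T))
    (hODE : ∀ᵐ t, 0 ≤ t → Y' t + β t * Y t ≤ 0) {s t : ℝ} (hs : 0 ≤ s) (hst : s ≤ t) :
    Y t ≤ Y s * Real.exp (-∫ x in s..t, β x) := by
  have hY'I {p q : ℝ} (hp : 0 ≤ p) (hq : 0 ≤ q) : IntervalIntegrable Y' volume p q :=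
    intervalIntegrable_of_forall_integrableOn_Icc hY' hp hq
  refine le_mul_exp_neg_integral_of_deriv_add_mul_nonpos hst (hY'I hs (hs.trans hst))
    (intervalIntegrable_of_forall_integrableOn_Icc hβ hs (hs.trans hst))
    (fun u hu ↦ ?_) (hODE.mono fun u hu hu' ↦ hu (hs.trans hu'.1.le))
  have hu₀ : 0 ≤ u := hs.trans hu.1
  rw [hY u hu₀, hY s hs,
    ← intervalIntegral.integral_interval_sub_left (hY'I le_rfl hu₀) (hY'I le_rfl hs)]
  ring

theorem linear_le_sub_of_le_period_increment {B : ℝ → ℝ} {T τ c M : ℝ} (hτ : 0 < τ)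
    (hc : 0 ≤ c) (hinc : ∀ s, T ≤ s → c ≤ B (s + τ) - B s)
    (hdip : ∀ s, T ≤ s → ∀ t ∈ Icc s (s + τ), -M ≤ B t - B s) {s t : ℝ} (hs : T ≤ s)
    (hst : s ≤ t) :
    c / τ * (t - s) - c - M ≤ B t - B s := by
  have hsteps : ∀ n : ℕ, ∀ s, T ≤ s → ∀ t ∈ Icc (s + n * τ) (s + n * τ + τ),
      n * c - M ≤ B t - B s := by
    intro n
    induction n with
    | zero => simpa using hdip
    | succ n ih =>
      intro s hs t ht
      push_cast at ht ⊢
      have h₁ := hinc s hs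
      have h₂ := ih (s + τ) (by linarith) t ⟨by linarith [ht.1], by linarith [ht.2]⟩
      linarith
  set n := ⌊(t - s) / τ⌋₊
  have hn₁ : n * τ ≤ t - s :=
    (le_div_iff₀ hτ).1 (Nat.floor_le (div_nonneg (by linarith) hτ.le))
  have hn₂ : t - s < (n + 1) * τ := (div_lt_iff₀ hτ).1 (Nat.lt_floor_add_one _)
  have hslope : c / τ * (t - s) ≤ (n + 1) * c := by
    rw [div_mul_eq_mul_div, div_le_iff₀ hτ]
    nlinarith
  linarith [hsteps n s hs t ⟨by linarith, by linarith⟩]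

theorem neg_integral_max_neg_zero_le_integral {β : ℝ → ℝ} {s t u : ℝ} (hst : s ≤ t)
    (htu : t ≤ u) (hβ : IntervalIntegrable β volume s u) :
    -∫ x in s..u, max (-β x) 0 ≤ ∫ x in s..t, β x := by
  have hβ' : IntervalIntegrable β volume s t :=
    hβ.mono_set (uIcc_subset_uIcc_left (Icc_subset_uIcc ⟨hst, htu⟩))
  have hneg {p q : ℝ} (h : IntervalIntegrable β volume p q) :
      IntervalIntegrable (fun x ↦ max (-β x) 0) volume p q :=
    ⟨h.1.neg.pos_part, h.2.neg.pos_part⟩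
  calc -∫ x in s..u, max (-β x) 0 ≤ -∫ x in s..t, max (-β x) 0 := by
        gcongr
        exact intervalIntegral.integral_mono_interval le_rfl hst htu
          (Eventually.of_forall fun x ↦ le_max_right _ _) (hneg hβ)
    _ = ∫ x in s..t, -max (-β x) 0 := intervalIntegral.integral_neg.symm
    _ ≤ ∫ x in s..t, β x := intervalIntegral.integral_mono_on hst (hneg hβ').neg hβ'
        fun x _ ↦ neg_le.1 (le_max_left _ _)

theorem linear_le_integral_of_period_bounds {β : ℝ → ℝ} {T τ c M : ℝ} (hτ : 0 < τ)
    (hc : 0 ≤ c) (hβ : ∀ t, IntegrableOn β (Icc 0 t)) (hT : 0 ≤ T)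
    (hperiod : ∀ s, T ≤ s →
      c ≤ ∫ x in s..s + τ, β x ∧ ∫ x in s..s + τ, max (-β x) 0 ≤ M)
    {t : ℝ} (ht : T ≤ t) :
    c / τ * (t - T) - c - M ≤ ∫ x in T..t, β x := by
  have hβI {p q : ℝ} (hp : 0 ≤ p) (hq : 0 ≤ q) : IntervalIntegrable β volume p q :=
    intervalIntegrable_of_forall_integrableOn_Icc hβ hp hq
  have hB {p q : ℝ} (hp : 0 ≤ p) (hq : 0 ≤ q) :
      (∫ x in (0 : ℝ)..q, β x) - ∫ x in (0 : ℝ)..p, β x = ∫ x in p..q, β x :=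
    intervalIntegral.integral_interval_sub_left (hβI le_rfl hq) (hβI le_rfl hp)
  rw [← hB hT (hT.trans ht)]
  refine linear_le_sub_of_le_period_increment (B := fun q ↦ ∫ x in (0 : ℝ)..q, β x) hτ hc
    (fun s hs ↦ ?_) (fun s hs u hu ↦ ?_) le_rfl ht
  · have hs₀ := hT.trans hs
    rw [hB hs₀ (by linarith)]
    exact (hperiod s hs).1
  · have hs₀ := hT.trans hs
    rw [hB hs₀ (hs₀.trans hu.1)]
    exact (neg_le_neg (hperiod s hs).2).trans
      (neg_integral_max_neg_zero_le_integral hu.1 hu.2 (hβI hs₀ (by linarith)))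

/-- Uniform Gronwall lemma (Lemma 2.4): if `Y ≥ 0` is locally absolutely
continuous with a.e. derivative `Y'` satisfying `Y' + β Y ≤ 0` a.e. on
`(0, ∞)`, where `β` is locally integrable,
`liminf_{t→∞} ∫_t^{t+τ} β ≥ γ > 0` and
`limsup_{t→∞} ∫_t^{t+τ} β⁻ < ∞`, then `Y(t) → 0` at an exponential rate. -/
theorem uniform_gronwall
    (τ : ℝ) (hτ : 0 < τ)
    (Y Y' β : ℝ → ℝ)
    (hYnonneg : ∀ t : ℝ, 0 ≤ t → 0 ≤ Y t)
    (hY'loc : ∀ T : ℝ, IntegrableOn Y' (Set.Icc 0 T))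
    (hYac : ∀ t : ℝ, 0 ≤ t → Y t = Y 0 + ∫ s in (0 : ℝ)..t, Y' s)
    (hβloc : ∀ T : ℝ, IntegrableOn β (Set.Icc 0 T))
    (hODE : ∀ᵐ t : ℝ, 0 ≤ t → Y' t + β t * Y t ≤ 0)
    (γ : ℝ) (hγ : 0 < γ)
    (hliminf : ∀ ε : ℝ, 0 < ε →
      ∀ᶠ t in atTop, γ - ε ≤ ∫ s in t..(t + τ), β s)
    (hlimsup : ∃ M : ℝ, ∀ᶠ t in atTop,
      (∫ s in t..(t + τ), max (-β s) 0) ≤ M) :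
    ∃ C : ℝ, 0 < C ∧ ∃ α : ℝ, 0 < α ∧ ∃ T : ℝ, 0 ≤ T ∧
      ∀ t : ℝ, T ≤ t → Y t ≤ C * Real.exp (-α * t) := by
  obtain ⟨M, hM⟩ := hlimsup
  obtain ⟨T, hT⟩ := eventually_atTop.1
    ((eventually_ge_atTop 0).and ((hliminf (γ / 2) (half_pos hγ)).and hM))
  have hT₀ : 0 ≤ T := (hT T le_rfl).1
  have hYT := hYnonneg T hT₀
  set α := γ / 2 / τ
  refine ⟨(Y T + 1) * Real.exp (γ / 2 + M + α * T), by positivity, α, by positivity, T, hT₀,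
    fun t ht ↦ ?_⟩
  have hlower : α * (t - T) - γ / 2 - M ≤ ∫ x in T..t, β x :=
    linear_le_integral_of_period_bounds hτ (half_pos hγ).le hβloc hT₀
      (fun s hs ↦ ⟨sub_half γ ▸ (hT s hs).2.1, (hT s hs).2.2⟩) ht
  calc Y t ≤ Y T * Real.exp (-∫ x in T..t, β x) :=
        le_mul_exp_neg_integral_of_deriv_add_mul_nonpos_Ici hY'loc hYac hβloc hODE hT₀ ht
    _ ≤ (Y T + 1) * Real.exp (γ / 2 + M + α * T + -α * t) := by
        gcongr
        · linarith
        · linarith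
    _ = (Y T + 1) * Real.exp (γ / 2 + M + α * T) * Real.exp (-α * t) := by
        rw [Real.exp_add, mul_assoc]
end

section
/- Let H be a real inner product space with inner product ⟨·,·⟩ and norm ‖·‖. Let w, J, d ∈ H, let g ≥ 0 and D ≥ 0 be real numbers, and let μ, ν, c₀, h be positive real numbers. Assume ⟨w, d⟩ = g², ‖d‖ ≤ D, the interpolation error bound ‖J − w‖² ≤ (1/2)c₀²h²·g² + (1/4)c₀⁴h⁴·D², and μ c₀² h² ≤ ν. Then −μ⟨J, d⟩ ≤ (ν/2)·D² − (μ/2)·g². -/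
/-!
Split `⟪J, d⟫ = ⟪J - w, d⟫ + g²` and bound the error term by Cauchy–Schwarz,
`-⟪J - w, d⟫ ≤ ‖J - w‖ D`. With `ε = c₀² h²`, Young's inequality in the form
`‖J - w‖ D ≤ ‖J - w‖² / ε + ε D² / 4` and the approximation hypothesis give
`‖J - w‖ D ≤ g² / 2 + ε D² / 2`; finally `μ ε ≤ ν`.
-/

open RealInnerProductSpace

theorem neg_inner_le_norm_sub_mul_sub {H : Type*} [NormedAddCommGroup H]
    [InnerProductSpace ℝ H] {w J d : H} {s D : ℝ} (hwd : ⟪w, d⟫ = s) (hdD : ‖d‖ ≤ D) :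
    -⟪J, d⟫ ≤ ‖J - w‖ * D - s := by
  have hsplit : ⟪J, d⟫ = ⟪J - w, d⟫ + s := by rw [inner_sub_left, hwd]; ring
  have hcs : -⟪J - w, d⟫ ≤ ‖J - w‖ * ‖d‖ := neg_le.mpr (abs_le.mp (abs_real_inner_le_norm _ _)).1
  have hmono : ‖J - w‖ * ‖d‖ ≤ ‖J - w‖ * D := mul_le_mul_of_nonneg_left hdD (norm_nonneg _)
  linarith

theorem mul_le_of_sq_le_of_nonneg {x g D ε : ℝ} (hε : 0 ≤ ε)
    (hx : x ^ 2 ≤ 1 / 2 * ε * g ^ 2 + 1 / 4 * ε ^ 2 * D ^ 2) :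
    x * D ≤ 1 / 2 * g ^ 2 + 1 / 2 * ε * D ^ 2 := by
  rcases hε.eq_or_lt with rfl | hεpos
  · have hx0 : x = 0 := pow_eq_zero_iff two_ne_zero |>.mp (by nlinarith [sq_nonneg x])
    subst hx0
    nlinarith [sq_nonneg g]
  · -- `ε (RHS - x D) ≥ (x - ε D / 2)² ≥ 0`
    refine le_of_mul_le_mul_left ?_ hεpos
    nlinarith [sq_nonneg (x - ε * D / 2)]

theorem nudging_estimate_type_II_general
    {H : Type*} [NormedAddCommGroup H] [InnerProductSpace ℝ H]
    (w J d : H) (g D μ ν c₀ h : ℝ)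
    (hμ : 0 < μ)
    (hwd : ⟪w, d⟫ = g ^ 2)
    (hdD : ‖d‖ ≤ D)
    (happrox : ‖J - w‖ ^ 2 ≤ (1 / 2) * c₀ ^ 2 * h ^ 2 * g ^ 2
        + (1 / 4) * c₀ ^ 4 * h ^ 4 * D ^ 2)
    (hμh : μ * c₀ ^ 2 * h ^ 2 ≤ ν) :
    -μ * ⟪J, d⟫ ≤ ν / 2 * D ^ 2 - μ / 2 * g ^ 2 := by
  have hsplit : -⟪J, d⟫ ≤ ‖J - w‖ * D - g ^ 2 := neg_inner_le_norm_sub_mul_sub hwd hdD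
  have hyoung : ‖J - w‖ * D ≤ 1 / 2 * g ^ 2 + 1 / 2 * (c₀ ^ 2 * h ^ 2) * D ^ 2 :=
    mul_le_of_sq_le_of_nonneg (by positivity) (by linarith)
  calc -μ * ⟪J, d⟫ = μ * -⟪J, d⟫ := by ring
    _ ≤ μ * (1 / 2 * (c₀ ^ 2 * h ^ 2) * D ^ 2 - 1 / 2 * g ^ 2) :=
        mul_le_mul_of_nonneg_left (by linarith) hμ.le
    _ = μ * c₀ ^ 2 * h ^ 2 / 2 * D ^ 2 - μ / 2 * g ^ 2 := by ring
    _ ≤ ν / 2 * D ^ 2 - μ / 2 * g ^ 2 := by gcongr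

/-- Abstract estimate for the feedback-nudging term with type II interpolant
observables: if `⟨w, d⟩ = g²`, `‖d‖ ≤ D`,
`‖J - w‖² ≤ (1/2) c₀² h² g² + (1/4) c₀⁴ h⁴ D²`, and `μ c₀² h² ≤ ν`, then
`-μ⟨J, d⟩ ≤ (ν/2) D² - (μ/2) g²`. -/
theorem nudging_estimate_type_II
    {H : Type*} [NormedAddCommGroup H] [InnerProductSpace ℝ H]
    (w J d : H) (g D μ ν c₀ h : ℝ)
    (hg : 0 ≤ g) (hD : 0 ≤ D) (hμ : 0 < μ) (hν : 0 < ν) (hc₀ : 0 < c₀) (hh : 0 < h)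
    (hwd : ⟪w, d⟫ = g ^ 2)
    (hdD : ‖d‖ ≤ D)
    (happrox : ‖J - w‖ ^ 2 ≤ (1 / 2) * c₀ ^ 2 * h ^ 2 * g ^ 2
        + (1 / 4) * c₀ ^ 4 * h ^ 4 * D ^ 2)
    (hμh : μ * c₀ ^ 2 * h ^ 2 ≤ ν) :
    -μ * ⟪J, d⟫ ≤ ν / 2 * D ^ 2 - μ / 2 * g ^ 2 :=
  nudging_estimate_type_II_general w J d g D μ ν c₀ h hμ hwd hdD happrox hμh
end

section
/- Let u = (u₁, u₂) : ℝ² → ℝ² be a smooth, compactly supported, divergence-free vector field (i.e., ∂_x u₁ + ∂_y u₂ = 0). Then ∫_{ℝ²} ((u·∇)u) · Δu dx = 0, where (u·∇)u has components u₁∂_x u_i + u₂∂_y u_i for i = 1, 2, and Δu is the componentwise Laplacian. -/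
open MeasureTheory

/-- Partial derivative in the `i`-th coordinate direction. -/
noncomputable def pd (i : Fin 2) (f : EuclideanSpace ℝ (Fin 2) → ℝ)
    (x : EuclideanSpace ℝ (Fin 2)) : ℝ :=
  fderiv ℝ f x (EuclideanSpace.single i 1)

/-- Laplacian `Δf = ∂₁∂₁ f + ∂₂∂₂ f`. -/
noncomputable def lap (f : EuclideanSpace ℝ (Fin 2) → ℝ)
    (x : EuclideanSpace ℝ (Fin 2)) : ℝ :=
  pd 0 (pd 0 f) x + pd 1 (pd 1 f) x

namespace NLOrth

variable {f g : EuclideanSpace ℝ (Fin 2) → ℝ} {i : Fin 2}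

lemma smooth_pd (hf : ContDiff ℝ (⊤ : ℕ∞) f) (i : Fin 2) : ContDiff ℝ (⊤ : ℕ∞) (pd i f) :=
  (hf.fderiv_right (by simp)).clm_apply contDiff_const

lemma hcs_pd (hc : HasCompactSupport f) (i : Fin 2) : HasCompactSupport (pd i f) :=
  hc.fderiv_apply (𝕜 := ℝ) _

lemma pd_mul (hf : ContDiff ℝ (⊤ : ℕ∞) f) (hg : ContDiff ℝ (⊤ : ℕ∞) g) (i : Fin 2) (x) :
    pd i (fun y => f y * g y) x = pd i f x * g x + f x * pd i g x := by
  unfold pd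
  rw [fderiv_fun_mul (hf.differentiable (by simp) x) (hg.differentiable (by simp) x)]
  simp [mul_comm]
  ring

lemma pd_add (hf : ContDiff ℝ (⊤ : ℕ∞) f) (hg : ContDiff ℝ (⊤ : ℕ∞) g) (i : Fin 2) (x) :
    pd i (fun y => f y + g y) x = pd i f x + pd i g x := by
  unfold pd
  rw [fderiv_fun_add (hf.differentiable (by simp) x) (hg.differentiable (by simp) x)]
  simp

lemma pd_sub (hf : ContDiff ℝ (⊤ : ℕ∞) f) (hg : ContDiff ℝ (⊤ : ℕ∞) g) (i : Fin 2) (x) :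
    pd i (fun y => f y - g y) x = pd i f x - pd i g x := by
  unfold pd
  rw [fderiv_fun_sub (hf.differentiable (by simp) x) (hg.differentiable (by simp) x)]
  simp

lemma pd_comm (hf : ContDiff ℝ (⊤ : ℕ∞) f) (i j : Fin 2) (x) :
    pd i (pd j f) x = pd j (pd i f) x := by
  have hd : DifferentiableAt ℝ (fderiv ℝ f) x :=
    ((hf.fderiv_right (m := 1) (WithTop.coe_le_coe.mpr le_top)).differentiable one_ne_zero) x
  have key : ∀ k l : Fin 2, pd k (pd l f) x
      = fderiv ℝ (fderiv ℝ f) x (EuclideanSpace.single k 1) (EuclideanSpace.single l 1) := by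
    intro k l
    have h : pd l f = fun y => (fderiv ℝ f y) (EuclideanSpace.single l 1) := rfl
    rw [pd, h, fderiv_clm_apply hd (differentiableAt_const _)]
    simp
  rw [key, key]
  exact (hf.contDiffAt.isSymmSndFDerivAt (by rw [minSmoothness_of_isRCLikeNormedField]; exact WithTop.coe_le_coe.mpr le_top)).eq _ _

lemma integral_pd_eq_zero (hf : ContDiff ℝ (⊤ : ℕ∞) f) (hc : HasCompactSupport f) (i : Fin 2) :
    ∫ x, pd i f x = 0 := by
  have h := integral_mul_fderiv_eq_neg_fderiv_mul_of_integrable (μ := volume)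
      (f := fun _ : EuclideanSpace ℝ (Fin 2) => (1:ℝ)) (g := f)
      (v := EuclideanSpace.single i 1) ?_ ?_ ?_ (fun x _ => differentiableAt_const _)
      (fun x _ => hf.differentiable (by simp) x)
  · simpa [pd] using h
  · simpa using (integrable_zero _ ℝ (volume : Measure (EuclideanSpace ℝ (Fin 2))))
  · simpa using (show Integrable (fun x => fderiv ℝ f x (EuclideanSpace.single i 1)) volume from
      ((smooth_pd hf i).continuous).integrable_of_hasCompactSupport (hcs_pd hc i))
  · simpa using (hf.continuous).integrable_of_hasCompactSupport hc

lemma integral_pd_add_pd_eq_zero {F G : EuclideanSpace ℝ (Fin 2) → ℝ}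
    (hF : ContDiff ℝ (⊤ : ℕ∞) F) (hcF : HasCompactSupport F)
    (hG : ContDiff ℝ (⊤ : ℕ∞) G) (hcG : HasCompactSupport G) :
    ∫ x, (pd 0 F x + pd 1 G x) = 0 := by
  rw [integral_add
      (((smooth_pd hF 0).continuous).integrable_of_hasCompactSupport (hcs_pd hcF 0))
      (((smooth_pd hG 1).continuous).integrable_of_hasCompactSupport (hcs_pd hcG 1)),
    integral_pd_eq_zero hF hcF 0, integral_pd_eq_zero hG hcG 1, add_zero]

/-- A bundled statement: `f` is smooth and its `i`-th partial derivative is `f'`. -/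
structure SD (i : Fin 2) (f f' : EuclideanSpace ℝ (Fin 2) → ℝ) : Prop where
  smooth : ContDiff ℝ (⊤ : ℕ∞) f
  deriv : ∀ x, pd i f x = f' x

lemma SD.of_smooth (hf : ContDiff ℝ (⊤ : ℕ∞) f) (i : Fin 2) : SD i f (pd i f) :=
  ⟨hf, fun _ => rfl⟩

lemma SD.const (i : Fin 2) (c : ℝ) : SD i (fun _ => c) (fun _ => 0) :=
  ⟨contDiff_const, fun x => by simp [pd]⟩

lemma SD.add {f f' g g' : EuclideanSpace ℝ (Fin 2) → ℝ} (hf : SD i f f') (hg : SD i g g') :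
    SD i (fun y => f y + g y) (fun y => f' y + g' y) :=
  ⟨hf.smooth.add hg.smooth, fun x => by
    rw [pd_add hf.smooth hg.smooth i x, hf.deriv, hg.deriv]⟩

lemma SD.sub {f f' g g' : EuclideanSpace ℝ (Fin 2) → ℝ} (hf : SD i f f') (hg : SD i g g') :
    SD i (fun y => f y - g y) (fun y => f' y - g' y) :=
  ⟨hf.smooth.sub hg.smooth, fun x => by
    rw [pd_sub hf.smooth hg.smooth i x, hf.deriv, hg.deriv]⟩

lemma SD.mul {f f' g g' : EuclideanSpace ℝ (Fin 2) → ℝ} (hf : SD i f f') (hg : SD i g g') :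
    SD i (fun y => f y * g y) (fun y => f' y * g y + f y * g' y) :=
  ⟨hf.smooth.mul hg.smooth, fun x => by
    rw [pd_mul hf.smooth hg.smooth i x, hf.deriv, hg.deriv]⟩

end NLOrth

open NLOrth

/-- The flux in direction `k`: `Pflux k u₁ u₂ = 2 ∑ᵢ (u·∇)uᵢ ∂ₖuᵢ - uₖ |∇u|²`. -/
noncomputable def Pflux (k : Fin 2) (u₁ u₂ : EuclideanSpace ℝ (Fin 2) → ℝ) :
    EuclideanSpace ℝ (Fin 2) → ℝ := fun y =>
  (fun _ => (2:ℝ)) y *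
      ((u₁ y * pd 0 u₁ y + u₂ y * pd 1 u₁ y) * pd k u₁ y
        + (u₁ y * pd 0 u₂ y + u₂ y * pd 1 u₂ y) * pd k u₂ y)
    - (if k = 0 then u₁ y else u₂ y) *
      ((pd 0 u₁ y * pd 0 u₁ y + pd 1 u₁ y * pd 1 u₁ y)
        + (pd 0 u₂ y * pd 0 u₂ y + pd 1 u₂ y * pd 1 u₂ y))

/-- Orthogonality identity (2.7a): for a smooth compactly supported
divergence-free field `u = (u₁, u₂)` on `ℝ²`, `∫ ((u·∇)u) · Δu = 0`. -/
theorem nonlinearity_orthogonality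
    (u₁ u₂ : EuclideanSpace ℝ (Fin 2) → ℝ)
    (hu₁ : ContDiff ℝ (⊤ : ℕ∞) u₁) (hu₂ : ContDiff ℝ (⊤ : ℕ∞) u₂)
    (hc₁ : HasCompactSupport u₁) (hc₂ : HasCompactSupport u₂)
    (hdiv : ∀ x, pd 0 u₁ x + pd 1 u₂ x = 0) :
    ∫ x, ((u₁ x * pd 0 u₁ x + u₂ x * pd 1 u₁ x) * lap u₁ x
        + (u₁ x * pd 0 u₂ x + u₂ x * pd 1 u₂ x) * lap u₂ x) = 0 := by
  -- SD atoms
  have U1 : ∀ i, SD i u₁ (pd i u₁) := fun i => SD.of_smooth hu₁ i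
  have U2 : ∀ i, SD i u₂ (pd i u₂) := fun i => SD.of_smooth hu₂ i
  have A : ∀ i, SD i (pd 0 u₁) (pd i (pd 0 u₁)) := fun i => SD.of_smooth (smooth_pd hu₁ 0) i
  have B : ∀ i, SD i (pd 1 u₁) (pd i (pd 1 u₁)) := fun i => SD.of_smooth (smooth_pd hu₁ 1) i
  have C : ∀ i, SD i (pd 0 u₂) (pd i (pd 0 u₂)) := fun i => SD.of_smooth (smooth_pd hu₂ 0) i
  have D : ∀ i, SD i (pd 1 u₂) (pd i (pd 1 u₂)) := fun i => SD.of_smooth (smooth_pd hu₂ 1) i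
  -- SD for the fluxes
  have hP := (((SD.const 0 2).mul
      ((((((U1 0).mul (A 0)).add ((U2 0).mul (B 0))).mul (A 0)).add
        (((((U1 0).mul (C 0)).add ((U2 0).mul (D 0))).mul (C 0)))))).sub
      ((U1 0).mul
        ((((A 0).mul (A 0)).add ((B 0).mul (B 0))).add
          (((C 0).mul (C 0)).add ((D 0).mul (D 0)))))
      : SD 0 (Pflux 0 u₁ u₂) _)
  have hQ := (((SD.const 1 2).mul
      ((((((U1 1).mul (A 1)).add ((U2 1).mul (B 1))).mul (B 1)).add
        (((((U1 1).mul (C 1)).add ((U2 1).mul (D 1))).mul (D 1)))))).sub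
      ((U2 1).mul
        ((((A 1).mul (A 1)).add ((B 1).mul (B 1))).add
          (((C 1).mul (C 1)).add ((D 1).mul (D 1)))))
      : SD 1 (Pflux 1 u₁ u₂) _)
  -- derivative constraints
  have hdiv' : ∀ (i : Fin 2) x, pd i (pd 0 u₁) x + pd i (pd 1 u₂) x = 0 := by
    intro i x
    have h := pd_add (smooth_pd hu₁ 0) (smooth_pd hu₂ 1) i x
    rw [show (fun y => pd 0 u₁ y + pd 1 u₂ y) = (fun _ => (0:ℝ)) from funext hdiv] at h
    simpa [pd] using h.symm
  -- the pointwise divergence identity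
  have hkey : ∀ x, pd 0 (Pflux 0 u₁ u₂) x + pd 1 (Pflux 1 u₁ u₂) x
      = 2 * ((u₁ x * pd 0 u₁ x + u₂ x * pd 1 u₁ x) * lap u₁ x
        + (u₁ x * pd 0 u₂ x + u₂ x * pd 1 u₂ x) * lap u₂ x) := by
    intro x
    have e0 : pd 0 (Pflux 0 u₁ u₂) x = _ := hP.deriv x
    have e1 : pd 1 (Pflux 1 u₁ u₂) x = _ := hQ.deriv x
    rw [e0, e1]
    simp only [lap]
    have hb0 : pd 0 (pd 1 u₁) x = pd 1 (pd 0 u₁) x := (pd_comm hu₁ 0 1 x).symm ▸ pd_comm hu₁ 0 1 x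
    have hc1 : pd 1 (pd 0 u₂) x = pd 0 (pd 1 u₂) x := pd_comm hu₂ 1 0 x
    have hd0 : pd 0 (pd 1 u₂) x = - pd 0 (pd 0 u₁) x := by linarith [hdiv' 0 x]
    have hd1 : pd 1 (pd 1 u₂) x = - pd 1 (pd 0 u₁) x := by linarith [hdiv' 1 x]
    have hd : pd 1 u₂ x = - pd 0 u₁ x := by linarith [hdiv x]
    have hb0' : pd 0 (pd 1 u₁) x = pd 1 (pd 0 u₁) x := pd_comm hu₁ 0 1 x
    rw [hb0', hc1, hd0, hd1, hd]
    ring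
  -- compact support of the fluxes
  have hcs : ∀ k : Fin 2, HasCompactSupport (Pflux k u₁ u₂) := by
    intro k
    apply HasCompactSupport.intro (hc₁.union hc₂)
    intro x hx
    have h1 : u₁ x = 0 := image_eq_zero_of_notMem_tsupport (fun h => hx (Set.mem_union_left _ h))
    have h2 : u₂ x = 0 := image_eq_zero_of_notMem_tsupport (fun h => hx (Set.mem_union_right _ h))
    unfold Pflux
    rcases Fin.exists_fin_two.mp ⟨k, rfl⟩ with _ | _ <;> simp [h1, h2]
  -- the integral of the divergence vanishes
  have hint : ∫ x, (pd 0 (Pflux 0 u₁ u₂) x + pd 1 (Pflux 1 u₁ u₂) x) = 0 :=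
    integral_pd_add_pd_eq_zero hP.smooth (hcs 0) hQ.smooth (hcs 1)
  rw [show (fun x => pd 0 (Pflux 0 u₁ u₂) x + pd 1 (Pflux 1 u₁ u₂) x)
      = (fun x => 2 * ((u₁ x * pd 0 u₁ x + u₂ x * pd 1 u₁ x) * lap u₁ x
        + (u₁ x * pd 0 u₂ x + u₂ x * pd 1 u₂ x) * lap u₂ x)) from funext hkey] at hint
  rw [integral_const_mul] at hint
  linarith
end

section
/- Let u = (u₁, u₂) and w = (w₁, w₂) be smooth, compactly supported, divergence-free vector fields from ℝ² to ℝ² (i.e., ∂_x u₁ + ∂_y u₂ = 0 and ∂_x w₁ + ∂_y w₂ = 0). Then ∫_{ℝ²} ((u·∇)w) · Δw dx + ∫_{ℝ²} ((w·∇)u) · Δw dx + ∫_{ℝ²} ((w·∇)w) · Δu dx = 0, where (a·∇)b has components a₁∂_x b_i + a₂∂_y b_i and Δ is the componentwise Laplacian. -/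
open MeasureTheory

namespace NSAux

local notation "E2" => EuclideanSpace ℝ (Fin 2)

variable {f g : E2 → ℝ} {x : E2} {i j : Fin 2}

@[fun_prop]
lemma contDiff_pd (hf : ContDiff ℝ (⊤ : ℕ∞) f) : ContDiff ℝ (⊤ : ℕ∞) (pd i f) := by
  exact (hf.fderiv_right (by simp)).clm_apply contDiff_const

@[fun_prop]
lemma differentiable_pd (hf : ContDiff ℝ (⊤ : ℕ∞) f) : Differentiable ℝ (pd i f) :=
  (contDiff_pd hf).differentiable (by simp)

lemma continuous_pd (hf : ContDiff ℝ (⊤ : ℕ∞) f) : Continuous (pd i f) :=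
  (contDiff_pd hf).continuous

lemma hasCompactSupport_pd (hc : HasCompactSupport f) : HasCompactSupport (pd i f) :=
  hc.fderiv_apply ℝ (EuclideanSpace.single i 1)

lemma pd_add (hf : DifferentiableAt ℝ f x) (hg : DifferentiableAt ℝ g x) :
    pd i (fun y => f y + g y) x = pd i f x + pd i g x := by
  simp only [pd, fderiv_fun_add hf hg, ContinuousLinearMap.add_apply]

lemma pd_sub (hf : DifferentiableAt ℝ f x) (hg : DifferentiableAt ℝ g x) :
    pd i (fun y => f y - g y) x = pd i f x - pd i g x := by
  simp only [pd, fderiv_fun_sub hf hg, ContinuousLinearMap.sub_apply]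

lemma pd_neg : pd i (fun y => -f y) x = -pd i f x := by
  simp only [pd, fderiv_fun_neg, ContinuousLinearMap.neg_apply]

lemma pd_const (c : ℝ) : pd i (fun _ => c) x = 0 := by
  simp [pd]

lemma pd_mul (hf : DifferentiableAt ℝ f x) (hg : DifferentiableAt ℝ g x) :
    pd i (fun y => f y * g y) x = pd i f x * g x + f x * pd i g x := by
  simp only [pd, fderiv_fun_mul hf hg, ContinuousLinearMap.add_apply,
    ContinuousLinearMap.coe_smul', Pi.smul_apply, smul_eq_mul]
  ring

lemma pd_pd (hf : ContDiff ℝ (⊤ : ℕ∞) f) : pd i (pd j f) x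
    = fderiv ℝ (fderiv ℝ f) x (EuclideanSpace.single i 1) (EuclideanSpace.single j 1) := by
  have hd : DifferentiableAt ℝ (fderiv ℝ f) x :=
    ((hf.fderiv_right (m := (⊤ : ℕ∞)) (by simp)).differentiable (by simp)) x
  show fderiv ℝ (fun y => fderiv ℝ f y (EuclideanSpace.single j 1)) x _ = _
  rw [fderiv_clm_apply hd (differentiableAt_const _)]
  simp

lemma pd_comm (hf : ContDiff ℝ (⊤ : ℕ∞) f) : pd i (pd j f) x = pd j (pd i f) x := by
  rw [pd_pd hf, pd_pd hf, (hf.contDiffAt.isSymmSndFDerivAt (by rw [minSmoothness_of_isRCLikeNormedField]; exact WithTop.coe_le_coe.mpr le_top)).eq]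

lemma integral_pd_eq_zero (hf : ContDiff ℝ (⊤ : ℕ∞) f) (hc : HasCompactSupport f) (i : Fin 2) :
    ∫ x : E2, pd i f x = 0 := by
  have h := integral_mul_fderiv_eq_neg_fderiv_mul_of_integrable (μ := (volume : Measure E2))
      (f := fun _ : E2 => (1 : ℝ)) (g := f) (v := EuclideanSpace.single i 1)
      ?_ ?_ ?_ (fun x _ => differentiableAt_const _) (fun x _ => hf.differentiable (by simp) x)
  · simpa [pd] using h
  · have : (fun x : E2 => fderiv ℝ (fun _ : E2 => (1:ℝ)) x (EuclideanSpace.single i 1) * f x)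
        = fun _ => (0:ℝ) := by
      ext y; simp
    rw [this]; exact integrable_zero _ _ _
  · have : (fun x : E2 => (1:ℝ) * fderiv ℝ f x (EuclideanSpace.single i 1)) = pd i f := by
      ext y; simp [pd]
    rw [this]
    exact (continuous_pd hf).integrable_of_hasCompactSupport (hasCompactSupport_pd hc)
  · simpa using hf.continuous.integrable_of_hasCompactSupport hc

/-- The first component of the vector field whose divergence equals the total integrand. -/
noncomputable def GG (u₁ u₂ w₁ w₂ : E2 → ℝ) : E2 → ℝ := fun x =>
  (u₁ x * pd 0 w₂ x + u₂ x * pd 1 w₂ x) * (pd 0 w₂ x - pd 1 w₁ x)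
  + (w₁ x * pd 0 u₂ x + w₂ x * pd 1 u₂ x) * (pd 0 w₂ x - pd 1 w₁ x)
  + (w₁ x * pd 0 w₂ x + w₂ x * pd 1 w₂ x) * (pd 0 u₂ x - pd 1 u₁ x)
  - u₁ x * ((pd 0 w₂ x - pd 1 w₁ x) * (pd 0 w₂ x - pd 1 w₁ x)) * (2⁻¹ : ℝ)
  - w₁ x * ((pd 0 u₂ x - pd 1 u₁ x) * (pd 0 w₂ x - pd 1 w₁ x))

/-- The second component of the vector field whose divergence equals the total integrand. -/
noncomputable def HH (u₁ u₂ w₁ w₂ : E2 → ℝ) : E2 → ℝ := fun x =>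
  -((u₁ x * pd 0 w₁ x + u₂ x * pd 1 w₁ x) * (pd 0 w₂ x - pd 1 w₁ x))
  - (w₁ x * pd 0 u₁ x + w₂ x * pd 1 u₁ x) * (pd 0 w₂ x - pd 1 w₁ x)
  - (w₁ x * pd 0 w₁ x + w₂ x * pd 1 w₁ x) * (pd 0 u₂ x - pd 1 u₁ x)
  - u₂ x * ((pd 0 w₂ x - pd 1 w₁ x) * (pd 0 w₂ x - pd 1 w₁ x)) * (2⁻¹ : ℝ)
  - w₂ x * ((pd 0 u₂ x - pd 1 u₁ x) * (pd 0 w₂ x - pd 1 w₁ x))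

lemma key (u₁ u₂ w₁ w₂ : E2 → ℝ)
    (hu₁ : ContDiff ℝ (⊤ : ℕ∞) u₁) (hu₂ : ContDiff ℝ (⊤ : ℕ∞) u₂)
    (hw₁ : ContDiff ℝ (⊤ : ℕ∞) w₁) (hw₂ : ContDiff ℝ (⊤ : ℕ∞) w₂)
    (hdivu : ∀ x, pd 0 u₁ x + pd 1 u₂ x = 0)
    (hdivw : ∀ x, pd 0 w₁ x + pd 1 w₂ x = 0) (x : E2) :
    ((u₁ x * pd 0 w₁ x + u₂ x * pd 1 w₁ x) * lap w₁ x
         + (u₁ x * pd 0 w₂ x + u₂ x * pd 1 w₂ x) * lap w₂ x)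
    + ((w₁ x * pd 0 u₁ x + w₂ x * pd 1 u₁ x) * lap w₁ x
         + (w₁ x * pd 0 u₂ x + w₂ x * pd 1 u₂ x) * lap w₂ x)
    + ((w₁ x * pd 0 w₁ x + w₂ x * pd 1 w₁ x) * lap u₁ x
         + (w₁ x * pd 0 w₂ x + w₂ x * pd 1 w₂ x) * lap u₂ x)
    = pd 0 (GG u₁ u₂ w₁ w₂) x + pd 1 (HH u₁ u₂ w₁ w₂) x := by
  have d₁ : Differentiable ℝ u₁ := hu₁.differentiable (by simp)
  have d₂ : Differentiable ℝ u₂ := hu₂.differentiable (by simp)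
  have d₃ : Differentiable ℝ w₁ := hw₁.differentiable (by simp)
  have d₄ : Differentiable ℝ w₂ := hw₂.differentiable (by simp)
  have eu : ∀ y, pd 1 u₂ y = -pd 0 u₁ y := fun y => by linarith [hdivu y]
  have ew : ∀ y, pd 1 w₂ y = -pd 0 w₁ y := fun y => by linarith [hdivw y]
  have du : ∀ (i : Fin 2) (y : E2), pd i (pd 1 u₂) y = -pd i (pd 0 u₁) y := by
    intro i y
    have h : pd 1 u₂ = fun y => -pd 0 u₁ y := funext eu
    rw [h, pd_neg]
  have dw : ∀ (i : Fin 2) (y : E2), pd i (pd 1 w₂) y = -pd i (pd 0 w₁) y := by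
    intro i y
    have h : pd 1 w₂ = fun y => -pd 0 w₁ y := funext ew
    rw [h, pd_neg]
  have cu₁ : ∀ y : E2, pd 1 (pd 0 u₁) y = pd 0 (pd 1 u₁) y := fun y => pd_comm hu₁
  have cu₂ : ∀ y : E2, pd 1 (pd 0 u₂) y = pd 0 (pd 1 u₂) y := fun y => pd_comm hu₂
  have cw₁ : ∀ y : E2, pd 1 (pd 0 w₁) y = pd 0 (pd 1 w₁) y := fun y => pd_comm hw₁
  have cw₂ : ∀ y : E2, pd 1 (pd 0 w₂) y = pd 0 (pd 1 w₂) y := fun y => pd_comm hw₂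
  unfold GG HH
  simp only [lap]
  simp (disch := fun_prop) only [pd_add, pd_sub, pd_mul, pd_neg, pd_const]
  simp only [cu₂, cw₂, du, dw, cu₁, cw₁, eu, ew]
  try ring

end NSAux

open NSAux in
/-- Polarized orthogonality identity (2.7b): for smooth compactly supported
divergence-free fields `u = (u₁, u₂)` and `w = (w₁, w₂)` on `ℝ²`,
`∫ ((u·∇)w)·Δw + ∫ ((w·∇)u)·Δw + ∫ ((w·∇)w)·Δu = 0`. -/
theorem nonlinearity_orthogonality_polarized
    (u₁ u₂ w₁ w₂ : EuclideanSpace ℝ (Fin 2) → ℝ)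
    (hu₁ : ContDiff ℝ (⊤ : ℕ∞) u₁) (hu₂ : ContDiff ℝ (⊤ : ℕ∞) u₂)
    (hw₁ : ContDiff ℝ (⊤ : ℕ∞) w₁) (hw₂ : ContDiff ℝ (⊤ : ℕ∞) w₂)
    (hcu₁ : HasCompactSupport u₁) (hcu₂ : HasCompactSupport u₂)
    (hcw₁ : HasCompactSupport w₁) (hcw₂ : HasCompactSupport w₂)
    (hdivu : ∀ x, pd 0 u₁ x + pd 1 u₂ x = 0)
    (hdivw : ∀ x, pd 0 w₁ x + pd 1 w₂ x = 0) :
    (∫ x, ((u₁ x * pd 0 w₁ x + u₂ x * pd 1 w₁ x) * lap w₁ x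
         + (u₁ x * pd 0 w₂ x + u₂ x * pd 1 w₂ x) * lap w₂ x))
    + (∫ x, ((w₁ x * pd 0 u₁ x + w₂ x * pd 1 u₁ x) * lap w₁ x
         + (w₁ x * pd 0 u₂ x + w₂ x * pd 1 u₂ x) * lap w₂ x))
    + (∫ x, ((w₁ x * pd 0 w₁ x + w₂ x * pd 1 w₁ x) * lap u₁ x
         + (w₁ x * pd 0 w₂ x + w₂ x * pd 1 w₂ x) * lap u₂ x)) = 0 := by
  have hK : IsCompact (tsupport u₁ ∪ tsupport u₂ ∪ tsupport w₁ ∪ tsupport w₂) :=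
    ((hcu₁.union hcu₂).union hcw₁).union hcw₂
  have hmem : ∀ x ∉ tsupport u₁ ∪ tsupport u₂ ∪ tsupport w₁ ∪ tsupport w₂,
      u₁ x = 0 ∧ u₂ x = 0 ∧ w₁ x = 0 ∧ w₂ x = 0 := by
    intro x hx
    simp only [Set.mem_union, not_or] at hx
    exact ⟨image_eq_zero_of_notMem_tsupport hx.1.1.1, image_eq_zero_of_notMem_tsupport hx.1.1.2,
      image_eq_zero_of_notMem_tsupport hx.1.2, image_eq_zero_of_notMem_tsupport hx.2⟩
  have contLap : ∀ f : EuclideanSpace ℝ (Fin 2) → ℝ, ContDiff ℝ (⊤ : ℕ∞) f → Continuous (lap f) := by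
    intro f hf
    have : Continuous (fun x => pd 0 (pd 0 f) x + pd 1 (pd 1 f) x) :=
      (continuous_pd (contDiff_pd hf)).add (continuous_pd (contDiff_pd hf))
    exact this
  -- Integrability of the three integrands
  have int1 : Integrable (fun x : EuclideanSpace ℝ (Fin 2) =>
      (u₁ x * pd 0 w₁ x + u₂ x * pd 1 w₁ x) * lap w₁ x
      + (u₁ x * pd 0 w₂ x + u₂ x * pd 1 w₂ x) * lap w₂ x) := by
    apply Continuous.integrable_of_hasCompactSupport
    · exact (((hu₁.continuous.mul (continuous_pd hw₁)).add
        (hu₂.continuous.mul (continuous_pd hw₁))).mul (contLap w₁ hw₁)).add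
        (((hu₁.continuous.mul (continuous_pd hw₂)).add
        (hu₂.continuous.mul (continuous_pd hw₂))).mul (contLap w₂ hw₂))
    · refine HasCompactSupport.intro hK fun x hx => ?_
      obtain ⟨h1, h2, h3, h4⟩ := hmem x hx
      rw [h1, h2]; ring
  have int2 : Integrable (fun x : EuclideanSpace ℝ (Fin 2) =>
      (w₁ x * pd 0 u₁ x + w₂ x * pd 1 u₁ x) * lap w₁ x
      + (w₁ x * pd 0 u₂ x + w₂ x * pd 1 u₂ x) * lap w₂ x) := by
    apply Continuous.integrable_of_hasCompactSupport
    · exact (((hw₁.continuous.mul (continuous_pd hu₁)).add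
        (hw₂.continuous.mul (continuous_pd hu₁))).mul (contLap w₁ hw₁)).add
        (((hw₁.continuous.mul (continuous_pd hu₂)).add
        (hw₂.continuous.mul (continuous_pd hu₂))).mul (contLap w₂ hw₂))
    · refine HasCompactSupport.intro hK fun x hx => ?_
      obtain ⟨h1, h2, h3, h4⟩ := hmem x hx
      rw [h3, h4]; ring
  have int3 : Integrable (fun x : EuclideanSpace ℝ (Fin 2) =>
      (w₁ x * pd 0 w₁ x + w₂ x * pd 1 w₁ x) * lap u₁ x
      + (w₁ x * pd 0 w₂ x + w₂ x * pd 1 w₂ x) * lap u₂ x) := by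
    apply Continuous.integrable_of_hasCompactSupport
    · exact (((hw₁.continuous.mul (continuous_pd hw₁)).add
        (hw₂.continuous.mul (continuous_pd hw₁))).mul (contLap u₁ hu₁)).add
        (((hw₁.continuous.mul (continuous_pd hw₂)).add
        (hw₂.continuous.mul (continuous_pd hw₂))).mul (contLap u₂ hu₂))
    · refine HasCompactSupport.intro hK fun x hx => ?_
      obtain ⟨h1, h2, h3, h4⟩ := hmem x hx
      rw [h3, h4]; ring
  -- Smoothness and compact support of G and H
  have hGsmooth : ContDiff ℝ (⊤ : ℕ∞) (GG u₁ u₂ w₁ w₂) := by unfold GG; fun_prop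
  have hHsmooth : ContDiff ℝ (⊤ : ℕ∞) (HH u₁ u₂ w₁ w₂) := by unfold HH; fun_prop
  have hGcs : HasCompactSupport (GG u₁ u₂ w₁ w₂) := by
    refine HasCompactSupport.intro hK fun x hx => ?_
    obtain ⟨h1, h2, h3, h4⟩ := hmem x hx
    unfold GG; rw [h1, h2, h3, h4]; ring
  have hHcs : HasCompactSupport (HH u₁ u₂ w₁ w₂) := by
    refine HasCompactSupport.intro hK fun x hx => ?_
    obtain ⟨h1, h2, h3, h4⟩ := hmem x hx
    unfold HH; rw [h1, h2, h3, h4]; ring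
  have intG : Integrable (fun x => pd 0 (GG u₁ u₂ w₁ w₂) x) :=
    (continuous_pd hGsmooth).integrable_of_hasCompactSupport (hasCompactSupport_pd hGcs)
  have intH : Integrable (fun x => pd 1 (HH u₁ u₂ w₁ w₂) x) :=
    (continuous_pd hHsmooth).integrable_of_hasCompactSupport (hasCompactSupport_pd hHcs)
  have hkey := key u₁ u₂ w₁ w₂ hu₁ hu₂ hw₁ hw₂ hdivu hdivw
  have hsum : (∫ x, (((u₁ x * pd 0 w₁ x + u₂ x * pd 1 w₁ x) * lap w₁ x
         + (u₁ x * pd 0 w₂ x + u₂ x * pd 1 w₂ x) * lap w₂ x)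
      + ((w₁ x * pd 0 u₁ x + w₂ x * pd 1 u₁ x) * lap w₁ x
         + (w₁ x * pd 0 u₂ x + w₂ x * pd 1 u₂ x) * lap w₂ x)
      + ((w₁ x * pd 0 w₁ x + w₂ x * pd 1 w₁ x) * lap u₁ x
         + (w₁ x * pd 0 w₂ x + w₂ x * pd 1 w₂ x) * lap u₂ x)))
      = (∫ x, ((u₁ x * pd 0 w₁ x + u₂ x * pd 1 w₁ x) * lap w₁ x
         + (u₁ x * pd 0 w₂ x + u₂ x * pd 1 w₂ x) * lap w₂ x))
    + (∫ x, ((w₁ x * pd 0 u₁ x + w₂ x * pd 1 u₁ x) * lap w₁ x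
         + (w₁ x * pd 0 u₂ x + w₂ x * pd 1 u₂ x) * lap w₂ x))
    + (∫ x, ((w₁ x * pd 0 w₁ x + w₂ x * pd 1 w₁ x) * lap u₁ x
         + (w₁ x * pd 0 w₂ x + w₂ x * pd 1 w₂ x) * lap u₂ x)) := by
    have int12 : Integrable (fun x : EuclideanSpace ℝ (Fin 2) =>
        ((u₁ x * pd 0 w₁ x + u₂ x * pd 1 w₁ x) * lap w₁ x
         + (u₁ x * pd 0 w₂ x + u₂ x * pd 1 w₂ x) * lap w₂ x)
      + ((w₁ x * pd 0 u₁ x + w₂ x * pd 1 u₁ x) * lap w₁ x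
         + (w₁ x * pd 0 u₂ x + w₂ x * pd 1 u₂ x) * lap w₂ x)) := int1.add int2
    rw [integral_add int12 int3, integral_add int1 int2]
  rw [← hsum]
  calc ∫ x, (((u₁ x * pd 0 w₁ x + u₂ x * pd 1 w₁ x) * lap w₁ x
         + (u₁ x * pd 0 w₂ x + u₂ x * pd 1 w₂ x) * lap w₂ x)
      + ((w₁ x * pd 0 u₁ x + w₂ x * pd 1 u₁ x) * lap w₁ x
         + (w₁ x * pd 0 u₂ x + w₂ x * pd 1 u₂ x) * lap w₂ x)
      + ((w₁ x * pd 0 w₁ x + w₂ x * pd 1 w₁ x) * lap u₁ x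
         + (w₁ x * pd 0 w₂ x + w₂ x * pd 1 w₂ x) * lap u₂ x))
      = ∫ x, (pd 0 (GG u₁ u₂ w₁ w₂) x + pd 1 (HH u₁ u₂ w₁ w₂) x) := by
        exact integral_congr_ae (Filter.Eventually.of_forall fun x => hkey x)
    _ = (∫ x, pd 0 (GG u₁ u₂ w₁ w₂) x) + ∫ x, pd 1 (HH u₁ u₂ w₁ w₂) x :=
        integral_add intG intH
    _ = 0 := by
        rw [integral_pd_eq_zero hGsmooth hGcs 0, integral_pd_eq_zero hHsmooth hHcs 1, add_zero]
end

section
/- There exists a constant c₁ > 0 such that for every smooth compactly supported vector field u = (u₁, u₂) : ℝ² → ℝ², ‖(u·∇)u‖_{L²} ≤ c₁ · ‖u‖_{L²}^{1/2} · ‖∇u‖_{L²} · ‖Δu‖_{L²}^{1/2}, where (u·∇)u has components u₁∂_x u_i + u₂∂_y u_i, ‖u‖_{L²}² = ∫ (u₁² + u₂²) dx, ‖∇u‖_{L²}² = ∫ (|∇u₁|² + |∇u₂|²) dx, and ‖Δu‖_{L²}² = ∫ ((Δu₁)² + (Δu₂)²) dx. -/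
open MeasureTheory Module ENNReal NNReal

noncomputable abbrev E2 : Type := EuclideanSpace ℝ (Fin 2)

lemma opnorm_sq_le (L : E2 →L[ℝ] ℝ) :
    ‖L‖ ^ 2 ≤ (L (EuclideanSpace.single 0 1)) ^ 2 + (L (EuclideanSpace.single 1 1)) ^ 2 := by
  set a := L (EuclideanSpace.single 0 1)
  set b := L (EuclideanSpace.single 1 1)
  have hab : (0:ℝ) ≤ a ^ 2 + b ^ 2 := by positivity
  have hL : ‖L‖ ≤ Real.sqrt (a ^ 2 + b ^ 2) := by
    apply ContinuousLinearMap.opNorm_le_bound _ (Real.sqrt_nonneg _)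
    intro x
    have hx : x = x 0 • EuclideanSpace.single (0 : Fin 2) (1:ℝ)
        + x 1 • EuclideanSpace.single (1 : Fin 2) (1:ℝ) := by
      ext i
      rw [PiLp.add_apply, PiLp.smul_apply, PiLp.smul_apply, EuclideanSpace.single_apply,
        EuclideanSpace.single_apply]
      fin_cases i <;> simp
    have hxn : ‖x‖ = Real.sqrt ((x 0) ^ 2 + (x 1) ^ 2) := by
      rw [EuclideanSpace.norm_eq]
      congr 1
      rw [Fin.sum_univ_two]
      simp [sq_abs]
    have hLx : L x = x 0 * a + x 1 * b := by
      conv_lhs => rw [hx]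
      simp [a, b, mul_comm]
    rw [hLx, hxn, Real.norm_eq_abs, ← Real.sqrt_sq_eq_abs, ← Real.sqrt_mul hab]
    apply Real.sqrt_le_sqrt
    nlinarith [sq_nonneg (a * x 1 - b * x 0)]
  calc ‖L‖ ^ 2 ≤ Real.sqrt (a ^ 2 + b ^ 2) ^ 2 :=
        pow_le_pow_left₀ (norm_nonneg _) hL 2
    _ = a ^ 2 + b ^ 2 := Real.sq_sqrt hab

lemma lint_sq_eq {V : Type*} [NormedAddCommGroup V] {F : E2 → V}
    (hc : Continuous F) (hcs : HasCompactSupport F) :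
    ∫⁻ x, ((‖F x‖₊ : ℝ≥0∞)) ^ (2:ℝ) = ENNReal.ofReal (∫ x, ‖F x‖ ^ 2) := by
  have hint : Integrable (fun x => ‖F x‖ ^ 2) (volume : Measure E2) :=
    ((hc.norm.pow 2)).integrable_of_hasCompactSupport
      (hcs.comp_left (g := fun v : V => ‖v‖ ^ 2) (by simp) : HasCompactSupport (fun x => ‖F x‖ ^ 2))
  rw [ofReal_integral_eq_lintegral_ofReal hint
    (Filter.Eventually.of_forall fun x => by positivity)]
  apply lintegral_congr fun x => ?_
  rw [ENNReal.ofReal_pow (norm_nonneg _), ofReal_norm_eq_enorm, ← enorm_eq_nnnorm,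
    ← ENNReal.rpow_natCast]
  norm_num

lemma lint_sq_eq' {f : E2 → ℝ} (hc : Continuous f) (hcs : HasCompactSupport f) :
    ∫⁻ x, ((‖f x‖₊ : ℝ≥0∞)) ^ (2:ℝ) = ENNReal.ofReal (∫ x, f x ^ 2) := by
  rw [lint_sq_eq hc hcs]
  congr 1
  exact integral_congr_ae (Filter.Eventually.of_forall fun x => by
    simp [Real.norm_eq_abs, sq_abs])

lemma lady : ∃ c : ℝ, 0 < c ∧ ∀ f : E2 → ℝ, ContDiff ℝ (⊤ : ℕ∞) f → HasCompactSupport f →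
    ∫ x, f x ^ 4 ≤ c * (∫ x, f x ^ 2) * (∫ x, ‖fderiv ℝ f x‖ ^ 2) := by
  set K := lintegralPowLePowLIntegralFDerivConst (volume : Measure E2) 2 with hK
  refine ⟨4 * K + 1, by positivity, fun f hf h2f => ?_⟩
  have hfc : Continuous f := hf.continuous
  have hf1 : ContDiff ℝ 1 f := hf.of_le (by simp)
  have hfd : Differentiable ℝ f := hf1.differentiable one_ne_zero
  have hf'c : Continuous (fderiv ℝ f) := hf.continuous_fderiv (by simp)
  have hf'cs : HasCompactSupport (fderiv ℝ f) := h2f.fderiv ℝ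
  -- the function g = f^2
  set g : E2 → ℝ := fun x => f x * f x with hgdef
  have hg1 : ContDiff ℝ 1 g := hf1.mul hf1
  have hgcs : HasCompactSupport g := h2f.mul_left (f := f)
  have hrank : (finrank ℝ E2 : ℝ) = 2 := by simp
  have hconj : Real.HolderConjugate (finrank ℝ E2) 2 := by
    rw [hrank]; constructor <;> norm_num
  have GNS := lintegral_pow_le_pow_lintegral_fderiv (volume : Measure E2) hg1 hgcs hconj
  -- compute fderiv g
  have hgder : ∀ x, ‖fderiv ℝ g x‖₊ = 2 * ‖f x‖₊ * ‖fderiv ℝ f x‖₊ := by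
    intro x
    have : fderiv ℝ g x = f x • fderiv ℝ f x + f x • fderiv ℝ f x := by
      rw [hgdef]
      rw [fderiv_fun_mul (hfd x) (hfd x)]
    rw [this, ← two_smul ℝ (f x • fderiv ℝ f x), smul_smul, nnnorm_smul]
    have : ‖(2 : ℝ) * f x‖₊ = 2 * ‖f x‖₊ := by
      rw [nnnorm_mul]
      congr 1
      ext
      simp
    rw [this]
  -- measurability
  have hmf : AEMeasurable (fun x => (‖f x‖₊ : ℝ≥0∞)) (volume : Measure E2) :=
    hfc.measurable.nnnorm.coe_nnreal_ennreal.aemeasurable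
  have hmf' : AEMeasurable (fun x => (‖fderiv ℝ f x‖₊ : ℝ≥0∞)) (volume : Measure E2) :=
    hf'c.measurable.nnnorm.coe_nnreal_ennreal.aemeasurable
  set a := ∫⁻ x, (‖f x‖₊ : ℝ≥0∞) ^ (2:ℝ) with ha
  set b := ∫⁻ x, (‖fderiv ℝ f x‖₊ : ℝ≥0∞) ^ (2:ℝ) with hb
  have hconj22 : Real.HolderConjugate 2 2 := by constructor <;> norm_num
  have hH := ENNReal.lintegral_mul_le_Lp_mul_Lq (volume : Measure E2) hconj22 hmf hmf'
  have h1 : ∫⁻ x, (‖fderiv ℝ g x‖₊ : ℝ≥0∞) ≤ 2 * (a ^ (1/(2:ℝ)) * b ^ (1/(2:ℝ))) := by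
    have e1 : ∫⁻ x, (‖fderiv ℝ g x‖₊ : ℝ≥0∞)
        = ∫⁻ x, 2 * ((‖f x‖₊ : ℝ≥0∞) * (‖fderiv ℝ f x‖₊ : ℝ≥0∞)) := by
      apply lintegral_congr fun x => ?_
      rw [hgder x]
      push_cast
      ring
    rw [e1, lintegral_const_mul' _ _ (by norm_num)]
    exact mul_le_mul_right hH 2
  have h2 : (∫⁻ x, (‖fderiv ℝ g x‖₊ : ℝ≥0∞)) ^ (2:ℝ) ≤ 4 * (a * b) := by
    calc (∫⁻ x, (‖fderiv ℝ g x‖₊ : ℝ≥0∞)) ^ (2:ℝ)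
        ≤ (2 * (a ^ (1/(2:ℝ)) * b ^ (1/(2:ℝ)))) ^ (2:ℝ) :=
          ENNReal.rpow_le_rpow h1 (by norm_num)
      _ = 4 * (a * b) := by
          rw [ENNReal.mul_rpow_of_nonneg _ _ (by norm_num),
            ENNReal.mul_rpow_of_nonneg _ _ (by norm_num),
            ← ENNReal.rpow_mul a, ← ENNReal.rpow_mul b]
          norm_num
  have key : ENNReal.ofReal (∫ x, f x ^ 4)
      ≤ ENNReal.ofReal ((4 * K + 1 : ℝ) * (∫ x, f x ^ 2) * (∫ x, ‖fderiv ℝ f x‖ ^ 2)) := by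
    have e4 : ENNReal.ofReal (∫ x, f x ^ 4) = ∫⁻ x, (‖g x‖₊ : ℝ≥0∞) ^ (2:ℝ) := by
      rw [lint_sq_eq' (f := g) (hfc.mul hfc) hgcs]
      congr 1
      exact integral_congr_ae (Filter.Eventually.of_forall fun x => by
        show f x ^ 4 = (f x * f x) ^ 2
        ring)
    have ea : a = ENNReal.ofReal (∫ x, f x ^ 2) := lint_sq_eq' hfc h2f
    have eb : b = ENNReal.ofReal (∫ x, ‖fderiv ℝ f x‖ ^ 2) := lint_sq_eq hf'c hf'cs
    calc ENNReal.ofReal (∫ x, f x ^ 4) = ∫⁻ x, (‖g x‖₊ : ℝ≥0∞) ^ (2:ℝ) := e4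
      _ ≤ K * (∫⁻ x, (‖fderiv ℝ g x‖₊ : ℝ≥0∞)) ^ (2:ℝ) := GNS
      _ ≤ K * (4 * (a * b)) := mul_le_mul_right h2 _
      _ = ENNReal.ofReal ((4 * (K:ℝ)) * (∫ x, f x ^ 2) * (∫ x, ‖fderiv ℝ f x‖ ^ 2)) := by
          rw [ea, eb, ENNReal.ofReal_mul (by positivity), ENNReal.ofReal_mul (by positivity),
            ENNReal.ofReal_mul (by norm_num), show ENNReal.ofReal (4:ℝ) = 4 from by norm_num,
            ENNReal.ofReal_coe_nnreal]
          ring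
      _ ≤ ENNReal.ofReal ((4 * K + 1 : ℝ) * (∫ x, f x ^ 2) * (∫ x, ‖fderiv ℝ f x‖ ^ 2)) := by
          apply ENNReal.ofReal_le_ofReal
          have p1 : (0:ℝ) ≤ ∫ x, f x ^ 2 :=
            integral_nonneg fun x => by positivity
          have p2 : (0:ℝ) ≤ ∫ x, ‖fderiv ℝ f x‖ ^ 2 :=
            integral_nonneg fun x => by positivity
          have p3 : (0:ℝ) ≤ (K:ℝ) := K.coe_nonneg
          nlinarith [mul_nonneg p1 p2]
  have hRnn : (0:ℝ) ≤ (4 * K + 1 : ℝ) * (∫ x, f x ^ 2) * (∫ x, ‖fderiv ℝ f x‖ ^ 2) := by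
    have h1 : (0:ℝ) ≤ ∫ x, f x ^ 2 := integral_nonneg fun x => by positivity
    have h2 : (0:ℝ) ≤ ∫ x, ‖fderiv ℝ f x‖ ^ 2 := integral_nonneg fun x => by positivity
    positivity
  exact (ENNReal.ofReal_le_ofReal_iff hRnn).1 key

lemma cs_int {p q : E2 → ℝ} (hpc : Continuous p) (hps : HasCompactSupport p)
    (hqc : Continuous q) (hqs : HasCompactSupport q)
    (hp0 : ∀ x, 0 ≤ p x) (hq0 : ∀ x, 0 ≤ q x) :
    ∫ x, p x * q x ≤ Real.sqrt (∫ x, p x ^ 2) * Real.sqrt (∫ x, q x ^ 2) := by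
  have hconj : Real.HolderConjugate 2 2 := by constructor <;> norm_num
  have hmp : MemLp p (ENNReal.ofReal 2) (volume : Measure E2) :=
    hpc.memLp_of_hasCompactSupport hps
  have hmq : MemLp q (ENNReal.ofReal 2) (volume : Measure E2) :=
    hqc.memLp_of_hasCompactSupport hqs
  have h := integral_mul_le_Lp_mul_Lq_of_nonneg hconj
    (Filter.Eventually.of_forall hp0) (Filter.Eventually.of_forall hq0) hmp hmq
  have e1 : ∫ x, p x ^ (2:ℝ) = ∫ x, p x ^ 2 :=
    integral_congr_ae (Filter.Eventually.of_forall fun x => by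
      show p x ^ (2:ℝ) = p x ^ 2
      rw [show (2:ℝ) = ((2:ℕ):ℝ) by norm_num, Real.rpow_natCast])
  have e2 : ∫ x, q x ^ (2:ℝ) = ∫ x, q x ^ 2 :=
    integral_congr_ae (Filter.Eventually.of_forall fun x => by
      show q x ^ (2:ℝ) = q x ^ 2
      rw [show (2:ℝ) = ((2:ℕ):ℝ) by norm_num, Real.rpow_natCast])
  rw [e1, e2] at h
  calc ∫ x, p x * q x ≤ (∫ x, p x ^ 2) ^ (1/(2:ℝ)) * (∫ x, q x ^ 2) ^ (1/(2:ℝ)) := h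
    _ = Real.sqrt (∫ x, p x ^ 2) * Real.sqrt (∫ x, q x ^ 2) := by
        rw [Real.sqrt_eq_rpow, Real.sqrt_eq_rpow]

lemma pd_contDiff {f : E2 → ℝ} (hf : ContDiff ℝ (⊤ : ℕ∞) f) (i : Fin 2) : ContDiff ℝ (⊤ : ℕ∞) (pd i f) := by
  unfold pd
  exact (hf.fderiv_right (by simp)).clm_apply contDiff_const

lemma pd_hcs {f : E2 → ℝ} (h2f : HasCompactSupport f) (i : Fin 2) :
    HasCompactSupport (pd i f) :=
  (h2f.fderiv ℝ).comp_left (g := fun L : E2 →L[ℝ] ℝ => L (EuclideanSpace.single i 1)) rfl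

lemma ibp {f g : E2 → ℝ} (hf : ContDiff ℝ (⊤ : ℕ∞) f) (h2f : HasCompactSupport f)
    (hg : ContDiff ℝ (⊤ : ℕ∞) g) (h2g : HasCompactSupport g) (i : Fin 2) :
    ∫ x, f x * pd i g x = - ∫ x, pd i f x * g x := by
  have hfc := hf.continuous
  have hgc := hg.continuous
  have hpfc : Continuous (pd i f) := (pd_contDiff hf i).continuous
  have hpgc : Continuous (pd i g) := (pd_contDiff hg i).continuous
  apply integral_mul_fderiv_eq_neg_fderiv_mul_of_integrable
  · exact ((hpfc.mul hgc).integrable_of_hasCompactSupport (h2g.mul_left))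
  · exact ((hfc.mul hpgc).integrable_of_hasCompactSupport (h2f.mul_right))
  · exact ((hfc.mul hgc).integrable_of_hasCompactSupport (h2g.mul_left))
  · exact fun x _ => hf.differentiable (by simp) x
  · exact fun x _ => hg.differentiable (by simp) x


lemma pd_pd {f : E2 → ℝ} (hf : ContDiff ℝ (⊤ : ℕ∞) f) (i j : Fin 2) (x : E2) :
    pd i (pd j f) x
      = fderiv ℝ (fderiv ℝ f) x (EuclideanSpace.single i 1) (EuclideanSpace.single j 1) := by
  unfold pd
  have hdf : DifferentiableAt ℝ (fderiv ℝ f) x :=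
    ((hf.fderiv_right (m := 1) (WithTop.coe_le_coe.2 le_top)).differentiable one_ne_zero).differentiableAt
  rw [fderiv_clm_apply hdf (differentiableAt_const _)]
  simp
lemma pd_comm {f : E2 → ℝ} (hf : ContDiff ℝ (⊤ : ℕ∞) f) (i j : Fin 2) (x : E2) :
    pd i (pd j f) x = pd j (pd i f) x := by
  rw [pd_pd hf, pd_pd hf]
  exact ((hf.contDiffAt).isSymmSndFDerivAt (by rw [minSmoothness_of_isRCLikeNormedField]; exact WithTop.coe_le_coe.2 le_top)) _ _

lemma mixed {v : E2 → ℝ} (hv : ContDiff ℝ (⊤ : ℕ∞) v) (h2v : HasCompactSupport v) :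
    ∫ x, (pd 0 (pd 1 v) x) ^ 2 = ∫ x, pd 0 (pd 0 v) x * pd 1 (pd 1 v) x := by
  have s0 := pd_contDiff hv 0
  have s1 := pd_contDiff hv 1
  have c0 := pd_hcs h2v 0
  have c1 := pd_hcs h2v 1
  have e1 : ∫ x, (pd 0 (pd 1 v) x) ^ 2 = ∫ x, pd 0 (pd 1 v) x * pd 1 (pd 0 v) x := by
    apply integral_congr_ae (Filter.Eventually.of_forall fun x => ?_)
    rw [pd_comm hv 1 0 x]
    ring
  have e2 := ibp (pd_contDiff s1 0) (pd_hcs c1 0) s0 c0 1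
  -- e2 : ∫ pd0 pd1 v * pd 1 (pd 0 v) = - ∫ pd 1 (pd 0 (pd 1 v)) * pd 0 v
  have e3 : ∫ x, pd 1 (pd 0 (pd 1 v)) x * pd 0 v x
      = ∫ x, pd 0 (pd 1 (pd 1 v)) x * pd 0 v x := by
    apply integral_congr_ae (Filter.Eventually.of_forall fun x => ?_)
    rw [pd_comm s1 1 0 x]
  have e4 := ibp (pd_contDiff s1 1) (pd_hcs c1 1) s0 c0 0
  -- e4 : ∫ pd1 pd1 v * pd 0 (pd 0 v) = - ∫ pd 0 (pd 1 (pd 1 v)) * pd 0 v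
  have e5 : ∫ x, pd 0 (pd 0 v) x * pd 1 (pd 1 v) x
      = ∫ x, pd 1 (pd 1 v) x * pd 0 (pd 0 v) x := by
    apply integral_congr_ae (Filter.Eventually.of_forall fun x => ?_)
    ring
  rw [e1, e2, e3, e5, e4]


lemma hcs_sq {h : E2 → ℝ} (hh : HasCompactSupport h) :
    HasCompactSupport (fun x => h x ^ 2) :=
  hh.comp_left (g := fun t : ℝ => t ^ 2) (by norm_num)

lemma int_sq {h : E2 → ℝ} (hc : Continuous h) (hh : HasCompactSupport h) :
    Integrable (fun x => h x ^ 2) (volume : Measure E2) :=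
  ((hc.pow 2).integrable_of_hasCompactSupport (hcs_sq hh))

lemma int_mul {h g : E2 → ℝ} (hc : Continuous h) (hh : HasCompactSupport h)
    (gc : Continuous g) :
    Integrable (fun x => h x * g x) (volume : Measure E2) :=
  ((hc.mul gc).integrable_of_hasCompactSupport hh.mul_right)

lemma int_nsq {h : E2 → ℝ} (hv : ContDiff ℝ (⊤ : ℕ∞) h) (hh : HasCompactSupport h) :
    Integrable (fun x => ‖fderiv ℝ h x‖ ^ 2) (volume : Measure E2) :=
  (((hv.continuous_fderiv (by simp)).norm.pow 2).integrable_of_hasCompactSupport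
    ((hh.fderiv ℝ).comp_left (g := fun L : E2 →L[ℝ] ℝ => ‖L‖ ^ 2) (by norm_num) :
        HasCompactSupport (fun x => ‖fderiv ℝ h x‖ ^ 2)))

lemma hess_le {v : E2 → ℝ} (hv : ContDiff ℝ (⊤ : ℕ∞) v) (h2v : HasCompactSupport v) :
    (∫ x, ‖fderiv ℝ (pd 0 v) x‖ ^ 2) + (∫ x, ‖fderiv ℝ (pd 1 v) x‖ ^ 2)
      ≤ ∫ x, (lap v x) ^ 2 := by
  have s0 := pd_contDiff hv 0
  have s1 := pd_contDiff hv 1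
  have c0 := pd_hcs h2v 0
  have c1 := pd_hcs h2v 1
  -- integrability facts
  have ia := int_sq (pd_contDiff s0 0).continuous (pd_hcs c0 0)
  have ib := int_sq (pd_contDiff s1 0).continuous (pd_hcs c1 0)
  have ic := int_sq (pd_contDiff s0 1).continuous (pd_hcs c0 1)
  have id' := int_sq (pd_contDiff s1 1).continuous (pd_hcs c1 1)
  have iad := int_mul (pd_contDiff s0 0).continuous (pd_hcs c0 0)
    (pd_contDiff s1 1).continuous
  -- bound the operator-norm integrals by sums of squares of partials
  have step1 : ∀ j : Fin 2, (∫ x, ‖fderiv ℝ (pd j v) x‖ ^ 2)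
      ≤ ∫ x, ((pd 0 (pd j v) x) ^ 2 + (pd 1 (pd j v) x) ^ 2) := by
    intro j
    have sj := pd_contDiff hv j
    have cj := pd_hcs h2v j
    apply integral_mono (int_nsq sj cj)
      ((int_sq (pd_contDiff sj 0).continuous (pd_hcs cj 0)).add
        (int_sq (pd_contDiff sj 1).continuous (pd_hcs cj 1)))
    intro x
    exact opnorm_sq_le (fderiv ℝ (pd j v) x)
  -- split the sums
  have split : ∀ j : Fin 2, ∫ x, ((pd 0 (pd j v) x) ^ 2 + (pd 1 (pd j v) x) ^ 2)
      = (∫ x, (pd 0 (pd j v) x) ^ 2) + ∫ x, (pd 1 (pd j v) x) ^ 2 := by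
    intro j
    have sj := pd_contDiff hv j
    have cj := pd_hcs h2v j
    exact integral_add (int_sq (pd_contDiff sj 0).continuous (pd_hcs cj 0))
      (int_sq (pd_contDiff sj 1).continuous (pd_hcs cj 1))
  -- the two mixed second derivatives agree
  have ecb : ∫ x, (pd 1 (pd 0 v) x) ^ 2 = ∫ x, (pd 0 (pd 1 v) x) ^ 2 := by
    apply integral_congr_ae (Filter.Eventually.of_forall fun x => ?_)
    rw [pd_comm hv 1 0 x]
  have emix := mixed hv h2v
  -- expand the laplacian square
  have elap : ∫ x, (lap v x) ^ 2
      = (∫ x, (pd 0 (pd 0 v) x) ^ 2) + ((∫ x, (pd 1 (pd 1 v) x) ^ 2)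
        + 2 * ∫ x, pd 0 (pd 0 v) x * pd 1 (pd 1 v) x) := by
    have : (fun x => (lap v x) ^ 2)
        = fun x => (pd 0 (pd 0 v) x) ^ 2
            + ((pd 1 (pd 1 v) x) ^ 2 + 2 * (pd 0 (pd 0 v) x * pd 1 (pd 1 v) x)) := by
      funext x
      show (pd 0 (pd 0 v) x + pd 1 (pd 1 v) x) ^ 2 = _
      ring
    have i2 : Integrable (fun x => 2 * (pd 0 (pd 0 v) x * pd 1 (pd 1 v) x))
        (volume : Measure E2) := iad.const_mul 2
    have i23 : Integrable (fun x => pd 1 (pd 1 v) x ^ 2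
        + 2 * (pd 0 (pd 0 v) x * pd 1 (pd 1 v) x)) (volume : Measure E2) := id'.add i2
    rw [this, integral_add ia i23, integral_add id' i2, MeasureTheory.integral_const_mul]
  calc (∫ x, ‖fderiv ℝ (pd 0 v) x‖ ^ 2) + (∫ x, ‖fderiv ℝ (pd 1 v) x‖ ^ 2)
      ≤ (∫ x, ((pd 0 (pd 0 v) x) ^ 2 + (pd 1 (pd 0 v) x) ^ 2))
        + ∫ x, ((pd 0 (pd 1 v) x) ^ 2 + (pd 1 (pd 1 v) x) ^ 2) :=
        add_le_add (step1 0) (step1 1)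
    _ = ∫ x, (lap v x) ^ 2 := by
        rw [split 0, split 1, ecb, emix, elap]
        ring

lemma pd_sq_le {v : E2 → ℝ} (i : Fin 2) (x : E2) :
    (pd i v x) ^ 2 ≤ ‖fderiv ℝ v x‖ ^ 2 := by
  have h := (fderiv ℝ v x).le_opNorm (EuclideanSpace.single i (1:ℝ))
  rw [EuclideanSpace.norm_single, norm_one, mul_one] at h
  calc (pd i v x) ^ 2 = ‖fderiv ℝ v x (EuclideanSpace.single i (1:ℝ))‖ ^ 2 := by
        rw [Real.norm_eq_abs, sq_abs]; rfl
    _ ≤ ‖fderiv ℝ v x‖ ^ 2 := pow_le_pow_left₀ (norm_nonneg _) h 2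

lemma hcs_p4 {h : E2 → ℝ} (hh : HasCompactSupport h) :
    HasCompactSupport (fun x => h x ^ 4) :=
  hh.comp_left (g := fun t : ℝ => t ^ 4) (by norm_num)

lemma int_p4 {h : E2 → ℝ} (hc : Continuous h) (hh : HasCompactSupport h) :
    Integrable (fun x => h x ^ 4) (volume : Measure E2) :=
  (hc.pow 4).integrable_of_hasCompactSupport (hcs_p4 hh)

lemma int_n4 {h : E2 → ℝ} (hv : ContDiff ℝ (⊤ : ℕ∞) h) (hh : HasCompactSupport h) :
    Integrable (fun x => ‖fderiv ℝ h x‖ ^ 4) (volume : Measure E2) :=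
  ((hv.continuous_fderiv (by simp)).norm.pow 4).integrable_of_hasCompactSupport
    ((hh.fderiv ℝ).comp_left (g := fun L : E2 →L[ℝ] ℝ => ‖L‖ ^ 4) (by norm_num) :
        HasCompactSupport (fun x => ‖fderiv ℝ h x‖ ^ 4))

lemma opnorm_sq_le' (v : E2 → ℝ) (x : E2) :
    ‖fderiv ℝ v x‖ ^ 2 ≤ (pd 0 v x) ^ 2 + (pd 1 v x) ^ 2 :=
  opnorm_sq_le (fderiv ℝ v x)

lemma grad4 {cL : ℝ} (hcL : 0 ≤ cL)
    (hlady : ∀ f : E2 → ℝ, ContDiff ℝ (⊤ : ℕ∞) f → HasCompactSupport f →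
      ∫ x, f x ^ 4 ≤ cL * (∫ x, f x ^ 2) * (∫ x, ‖fderiv ℝ f x‖ ^ 2))
    {v : E2 → ℝ} (hv : ContDiff ℝ (⊤ : ℕ∞) v) (h2v : HasCompactSupport v) :
    ∫ x, ‖fderiv ℝ v x‖ ^ 4
      ≤ 2 * cL * (∫ x, ‖fderiv ℝ v x‖ ^ 2) * (∫ x, (lap v x) ^ 2) := by
  have s0 := pd_contDiff hv 0
  have s1 := pd_contDiff hv 1
  have c0 := pd_hcs h2v 0
  have c1 := pd_hcs h2v 1
  set Bv := ∫ x, ‖fderiv ℝ v x‖ ^ 2 with hBv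
  set Dv := ∫ x, (lap v x) ^ 2 with hDv
  set S0 := ∫ x, ‖fderiv ℝ (pd 0 v) x‖ ^ 2 with hS0d
  set S1 := ∫ x, ‖fderiv ℝ (pd 1 v) x‖ ^ 2 with hS1d
  have hBv0 : 0 ≤ Bv := integral_nonneg fun x => by positivity
  have hS0 : (0:ℝ) ≤ S0 := integral_nonneg fun x => by positivity
  have hS1 : (0:ℝ) ≤ S1 := integral_nonneg fun x => by positivity
  have hsq : ∀ j : Fin 2, ∫ x, (pd j v x) ^ 2 ≤ Bv := fun j =>
    integral_mono (int_sq (pd_contDiff hv j).continuous (pd_hcs h2v j))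
      (int_nsq hv h2v) (fun x => pd_sq_le j x)
  have hpt : ∫ x, ‖fderiv ℝ v x‖ ^ 4 ≤ ∫ x, (2 * (pd 0 v x) ^ 4 + 2 * (pd 1 v x) ^ 4) := by
    apply integral_mono (int_n4 hv h2v)
      (((int_p4 s0.continuous c0).const_mul 2).add ((int_p4 s1.continuous c1).const_mul 2))
    intro x
    show ‖fderiv ℝ v x‖ ^ 4 ≤ 2 * (pd 0 v x) ^ 4 + 2 * (pd 1 v x) ^ 4
    have hop := opnorm_sq_le' v x
    have h4 : ‖fderiv ℝ v x‖ ^ 4 = (‖fderiv ℝ v x‖ ^ 2) ^ 2 := by ring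
    rw [h4]
    calc (‖fderiv ℝ v x‖ ^ 2) ^ 2 ≤ ((pd 0 v x) ^ 2 + (pd 1 v x) ^ 2) ^ 2 :=
          pow_le_pow_left₀ (by positivity) hop 2
      _ ≤ 2 * (pd 0 v x) ^ 4 + 2 * (pd 1 v x) ^ 4 := by
          nlinarith [sq_nonneg ((pd 0 v x) ^ 2 - (pd 1 v x) ^ 2)]
  have hsplit : ∫ x, (2 * (pd 0 v x) ^ 4 + 2 * (pd 1 v x) ^ 4)
      = 2 * (∫ x, (pd 0 v x) ^ 4) + 2 * ∫ x, (pd 1 v x) ^ 4 := by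
    rw [integral_add ((int_p4 s0.continuous c0).const_mul 2)
      ((int_p4 s1.continuous c1).const_mul 2), integral_const_mul, integral_const_mul]
  have l0 := hlady _ s0 c0
  have l1 := hlady _ s1 c1
  have b0 : cL * (∫ x, (pd 0 v x) ^ 2) * S0 ≤ cL * Bv * S0 :=
    mul_le_mul_of_nonneg_right (mul_le_mul_of_nonneg_left (hsq 0) hcL) hS0
  have b1 : cL * (∫ x, (pd 1 v x) ^ 2) * S1 ≤ cL * Bv * S1 :=
    mul_le_mul_of_nonneg_right (mul_le_mul_of_nonneg_left (hsq 1) hcL) hS1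
  have hess := hess_le hv h2v
  have hBD : cL * Bv * S0 + cL * Bv * S1 ≤ cL * Bv * Dv := by
    have e : cL * Bv * S0 + cL * Bv * S1 = cL * Bv * (S0 + S1) := by ring
    rw [e]
    exact mul_le_mul_of_nonneg_left hess (by positivity)
  calc ∫ x, ‖fderiv ℝ v x‖ ^ 4
      ≤ ∫ x, (2 * (pd 0 v x) ^ 4 + 2 * (pd 1 v x) ^ 4) := hpt
    _ = 2 * (∫ x, (pd 0 v x) ^ 4) + 2 * ∫ x, (pd 1 v x) ^ 4 := hsplit
    _ ≤ 2 * cL * Bv * Dv := by linarith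


lemma hcs_nsq {h : E2 → ℝ} (k : HasCompactSupport h) :
    HasCompactSupport (fun x => ‖fderiv ℝ h x‖ ^ 2) :=
  (k.fderiv ℝ).comp_left (g := fun L : E2 →L[ℝ] ℝ => ‖L‖ ^ 2) (by norm_num)

set_option maxHeartbeats 1000000 in
/-- Estimate (A.1) for the Navier-Stokes nonlinearity: there is `c₁ > 0` such
that for every smooth compactly supported vector field `u = (u₁, u₂) : ℝ² → ℝ²`,
`‖(u·∇)u‖_{L²} ≤ c₁ ‖u‖_{L²}^{1/2} ‖∇u‖_{L²} ‖Δu‖_{L²}^{1/2}`. -/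
theorem nonlinearity_interpolation_estimate :
    ∃ c₁ : ℝ, 0 < c₁ ∧
      ∀ u₁ u₂ : EuclideanSpace ℝ (Fin 2) → ℝ,
        ContDiff ℝ (⊤ : ℕ∞) u₁ → ContDiff ℝ (⊤ : ℕ∞) u₂ →
        HasCompactSupport u₁ → HasCompactSupport u₂ →
        Real.sqrt (∫ x, ((u₁ x * pd 0 u₁ x + u₂ x * pd 1 u₁ x) ^ 2
              + (u₁ x * pd 0 u₂ x + u₂ x * pd 1 u₂ x) ^ 2)) ≤
          c₁ * (Real.sqrt (∫ x, ((u₁ x) ^ 2 + (u₂ x) ^ 2))) ^ ((1 : ℝ) / 2)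
            * Real.sqrt (∫ x, (‖fderiv ℝ u₁ x‖ ^ 2 + ‖fderiv ℝ u₂ x‖ ^ 2))
            * (Real.sqrt (∫ x, ((lap u₁ x) ^ 2 + (lap u₂ x) ^ 2))) ^ ((1 : ℝ) / 2) := by
  obtain ⟨cL, hcL0, hlady⟩ := lady
  refine ⟨Real.sqrt (16 * cL), Real.sqrt_pos.2 (by positivity), ?_⟩
  intro u₁ u₂ h₁ h₂ k₁ k₂
  have cu₁ := h₁.continuous
  have cu₂ := h₂.continuous
  have f₁c : Continuous (fderiv ℝ u₁) := h₁.continuous_fderiv (by simp)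
  have f₂c : Continuous (fderiv ℝ u₂) := h₂.continuous_fderiv (by simp)
  -- continuity and support of q and P
  have qc : Continuous (fun x => u₁ x ^ 2 + u₂ x ^ 2) := by fun_prop
  have qcs : HasCompactSupport (fun x => u₁ x ^ 2 + u₂ x ^ 2) :=
    (hcs_sq k₁).add (hcs_sq k₂)
  have Pc : Continuous (fun x => ‖fderiv ℝ u₁ x‖ ^ 2 + ‖fderiv ℝ u₂ x‖ ^ 2) :=
    (f₁c.norm.pow 2).add (f₂c.norm.pow 2)
  have Pcs : HasCompactSupport (fun x => ‖fderiv ℝ u₁ x‖ ^ 2 + ‖fderiv ℝ u₂ x‖ ^ 2) :=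
    (hcs_nsq k₁).add (hcs_nsq k₂)
  have intq : Integrable (fun x => u₁ x ^ 2 + u₂ x ^ 2) (volume : Measure E2) :=
    qc.integrable_of_hasCompactSupport qcs
  have intP : Integrable (fun x => ‖fderiv ℝ u₁ x‖ ^ 2 + ‖fderiv ℝ u₂ x‖ ^ 2)
      (volume : Measure E2) := Pc.integrable_of_hasCompactSupport Pcs
  -- continuity and support of the laplacians
  have lc₁ : Continuous (lap u₁) := by
    unfold lap
    exact ((pd_contDiff (pd_contDiff h₁ 0) 0).continuous).add
      ((pd_contDiff (pd_contDiff h₁ 1) 1).continuous)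
  have lc₂ : Continuous (lap u₂) := by
    unfold lap
    exact ((pd_contDiff (pd_contDiff h₂ 0) 0).continuous).add
      ((pd_contDiff (pd_contDiff h₂ 1) 1).continuous)
  have ls₁ : HasCompactSupport (lap u₁) :=
    (pd_hcs (pd_hcs k₁ 0) 0).add (pd_hcs (pd_hcs k₁ 1) 1)
  have ls₂ : HasCompactSupport (lap u₂) :=
    (pd_hcs (pd_hcs k₂ 0) 0).add (pd_hcs (pd_hcs k₂ 1) 1)
  set A := ∫ x, ((u₁ x) ^ 2 + (u₂ x) ^ 2) with hAdef
  set B := ∫ x, (‖fderiv ℝ u₁ x‖ ^ 2 + ‖fderiv ℝ u₂ x‖ ^ 2) with hBdef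
  set D := ∫ x, ((lap u₁ x) ^ 2 + (lap u₂ x) ^ 2) with hDdef
  set X := ∫ x, ((u₁ x * pd 0 u₁ x + u₂ x * pd 1 u₁ x) ^ 2
      + (u₁ x * pd 0 u₂ x + u₂ x * pd 1 u₂ x) ^ 2) with hXdef
  have hA0 : 0 ≤ A := integral_nonneg fun x => by positivity
  have hB0 : 0 ≤ B := integral_nonneg fun x => by positivity
  have hD0 : 0 ≤ D := integral_nonneg fun x => by positivity
  have intD : Integrable (fun x => (lap u₁ x) ^ 2 + (lap u₂ x) ^ 2) (volume : Measure E2) :=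
    (int_sq lc₁ ls₁).add (int_sq lc₂ ls₂)
  -- componentwise bounds
  have hA1 : ∫ x, (u₁ x) ^ 2 ≤ A :=
    integral_mono (int_sq cu₁ k₁) intq fun x => by nlinarith [sq_nonneg (u₂ x)]
  have hA2 : ∫ x, (u₂ x) ^ 2 ≤ A :=
    integral_mono (int_sq cu₂ k₂) intq fun x => by nlinarith [sq_nonneg (u₁ x)]
  have hB1 : ∫ x, ‖fderiv ℝ u₁ x‖ ^ 2 ≤ B :=
    integral_mono (int_nsq h₁ k₁) intP fun x => le_add_of_nonneg_right (by positivity)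
  have hB2 : ∫ x, ‖fderiv ℝ u₂ x‖ ^ 2 ≤ B :=
    integral_mono (int_nsq h₂ k₂) intP fun x => le_add_of_nonneg_left (by positivity)
  have hD1 : ∫ x, (lap u₁ x) ^ 2 ≤ D :=
    integral_mono (int_sq lc₁ ls₁) intD fun x => le_add_of_nonneg_right (by positivity)
  have hD2 : ∫ x, (lap u₂ x) ^ 2 ≤ D :=
    integral_mono (int_sq lc₂ ls₂) intD fun x => le_add_of_nonneg_left (by positivity)
  have nA1 : (0:ℝ) ≤ ∫ x, (u₁ x) ^ 2 := integral_nonneg fun x => by positivity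
  have nA2 : (0:ℝ) ≤ ∫ x, (u₂ x) ^ 2 := integral_nonneg fun x => by positivity
  have nB1 : (0:ℝ) ≤ ∫ x, ‖fderiv ℝ u₁ x‖ ^ 2 := integral_nonneg fun x => by positivity
  have nB2 : (0:ℝ) ≤ ∫ x, ‖fderiv ℝ u₂ x‖ ^ 2 := integral_nonneg fun x => by positivity
  have nD1 : (0:ℝ) ≤ ∫ x, (lap u₁ x) ^ 2 := integral_nonneg fun x => by positivity
  have nD2 : (0:ℝ) ≤ ∫ x, (lap u₂ x) ^ 2 := integral_nonneg fun x => by positivity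
  -- Step α : X ≤ 2 ∫ q P
  have intqP : Integrable
      (fun x => (u₁ x ^ 2 + u₂ x ^ 2) * (‖fderiv ℝ u₁ x‖ ^ 2 + ‖fderiv ℝ u₂ x‖ ^ 2))
      (volume : Measure E2) := int_mul qc qcs Pc
  have hα : X ≤ 2 * ∫ x, (u₁ x ^ 2 + u₂ x ^ 2) * (‖fderiv ℝ u₁ x‖ ^ 2 + ‖fderiv ℝ u₂ x‖ ^ 2) := by
    have h := integral_mono_of_nonneg
      (f := fun x => (u₁ x * pd 0 u₁ x + u₂ x * pd 1 u₁ x) ^ 2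
        + (u₁ x * pd 0 u₂ x + u₂ x * pd 1 u₂ x) ^ 2)
      (g := fun x => 2 * ((u₁ x ^ 2 + u₂ x ^ 2) * (‖fderiv ℝ u₁ x‖ ^ 2 + ‖fderiv ℝ u₂ x‖ ^ 2)))
      (Filter.Eventually.of_forall fun x => by positivity)
      (intqP.const_mul 2)
      (Filter.Eventually.of_forall fun x => ?_)
    · exact h.trans (le_of_eq (integral_const_mul 2 _))
    · show (u₁ x * pd 0 u₁ x + u₂ x * pd 1 u₁ x) ^ 2
        + (u₁ x * pd 0 u₂ x + u₂ x * pd 1 u₂ x) ^ 2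
        ≤ 2 * ((u₁ x ^ 2 + u₂ x ^ 2) * (‖fderiv ℝ u₁ x‖ ^ 2 + ‖fderiv ℝ u₂ x‖ ^ 2))
      have r1 : (u₁ x * pd 0 u₁ x + u₂ x * pd 1 u₁ x) ^ 2
          ≤ (u₁ x ^ 2 + u₂ x ^ 2) * ((pd 0 u₁ x) ^ 2 + (pd 1 u₁ x) ^ 2) := by
        nlinarith [sq_nonneg (u₁ x * pd 1 u₁ x - u₂ x * pd 0 u₁ x)]
      have r2 : (u₁ x * pd 0 u₂ x + u₂ x * pd 1 u₂ x) ^ 2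
          ≤ (u₁ x ^ 2 + u₂ x ^ 2) * ((pd 0 u₂ x) ^ 2 + (pd 1 u₂ x) ^ 2) := by
        nlinarith [sq_nonneg (u₁ x * pd 1 u₂ x - u₂ x * pd 0 u₂ x)]
      have hq0 : (0:ℝ) ≤ u₁ x ^ 2 + u₂ x ^ 2 := by positivity
      have t1 := mul_le_mul_of_nonneg_left
        (add_le_add (pd_sq_le (v := u₁) 0 x) (pd_sq_le (v := u₁) 1 x)) hq0
      have t2 := mul_le_mul_of_nonneg_left
        (add_le_add (pd_sq_le (v := u₂) 0 x) (pd_sq_le (v := u₂) 1 x)) hq0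
      nlinarith [t1, t2, r1, r2]
  -- Step β : Cauchy-Schwarz
  have hβ : ∫ x, (u₁ x ^ 2 + u₂ x ^ 2) * (‖fderiv ℝ u₁ x‖ ^ 2 + ‖fderiv ℝ u₂ x‖ ^ 2)
      ≤ Real.sqrt (∫ x, (u₁ x ^ 2 + u₂ x ^ 2) ^ 2)
        * Real.sqrt (∫ x, (‖fderiv ℝ u₁ x‖ ^ 2 + ‖fderiv ℝ u₂ x‖ ^ 2) ^ 2) :=
    cs_int qc qcs Pc Pcs (fun x => by positivity) (fun x => by positivity)
  -- Step γ : ∫ q² ≤ 4 cL (A B)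
  have hγ : ∫ x, (u₁ x ^ 2 + u₂ x ^ 2) ^ 2 ≤ (4 * cL) * (A * B) := by
    have h1 : ∫ x, (u₁ x ^ 2 + u₂ x ^ 2) ^ 2
        ≤ ∫ x, (2 * u₁ x ^ 4 + 2 * u₂ x ^ 4) := by
      apply integral_mono (int_sq qc qcs)
        (((int_p4 cu₁ k₁).const_mul 2).add ((int_p4 cu₂ k₂).const_mul 2))
      intro x
      show (u₁ x ^ 2 + u₂ x ^ 2) ^ 2 ≤ 2 * u₁ x ^ 4 + 2 * u₂ x ^ 4
      nlinarith [sq_nonneg (u₁ x ^ 2 - u₂ x ^ 2)]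
    have h2 : ∫ x, (2 * u₁ x ^ 4 + 2 * u₂ x ^ 4)
        = 2 * (∫ x, u₁ x ^ 4) + 2 * ∫ x, u₂ x ^ 4 := by
      rw [integral_add ((int_p4 cu₁ k₁).const_mul 2) ((int_p4 cu₂ k₂).const_mul 2),
        integral_const_mul, integral_const_mul]
    have l1 := hlady u₁ h₁ k₁
    have l2 := hlady u₂ h₂ k₂
    have m1 : cL * (∫ x, (u₁ x) ^ 2) * (∫ x, ‖fderiv ℝ u₁ x‖ ^ 2) ≤ cL * A * B :=
      mul_le_mul (mul_le_mul_of_nonneg_left hA1 hcL0.le) hB1 nB1 (by positivity)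
    have m2 : cL * (∫ x, (u₂ x) ^ 2) * (∫ x, ‖fderiv ℝ u₂ x‖ ^ 2) ≤ cL * A * B :=
      mul_le_mul (mul_le_mul_of_nonneg_left hA2 hcL0.le) hB2 nB2 (by positivity)
    calc ∫ x, (u₁ x ^ 2 + u₂ x ^ 2) ^ 2
        ≤ ∫ x, (2 * u₁ x ^ 4 + 2 * u₂ x ^ 4) := h1
      _ = 2 * (∫ x, u₁ x ^ 4) + 2 * ∫ x, u₂ x ^ 4 := h2
      _ ≤ (4 * cL) * (A * B) := by nlinarith [l1, l2, m1, m2]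
  -- Step δ : ∫ P² ≤ 8 cL (B D)
  have hδ : ∫ x, (‖fderiv ℝ u₁ x‖ ^ 2 + ‖fderiv ℝ u₂ x‖ ^ 2) ^ 2 ≤ (8 * cL) * (B * D) := by
    have h1 : ∫ x, (‖fderiv ℝ u₁ x‖ ^ 2 + ‖fderiv ℝ u₂ x‖ ^ 2) ^ 2
        ≤ ∫ x, (2 * ‖fderiv ℝ u₁ x‖ ^ 4 + 2 * ‖fderiv ℝ u₂ x‖ ^ 4) := by
      apply integral_mono (int_sq Pc Pcs)
        (((int_n4 h₁ k₁).const_mul 2).add ((int_n4 h₂ k₂).const_mul 2))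
      intro x
      show (‖fderiv ℝ u₁ x‖ ^ 2 + ‖fderiv ℝ u₂ x‖ ^ 2) ^ 2
        ≤ 2 * ‖fderiv ℝ u₁ x‖ ^ 4 + 2 * ‖fderiv ℝ u₂ x‖ ^ 4
      nlinarith [sq_nonneg (‖fderiv ℝ u₁ x‖ ^ 2 - ‖fderiv ℝ u₂ x‖ ^ 2)]
    have h2 : ∫ x, (2 * ‖fderiv ℝ u₁ x‖ ^ 4 + 2 * ‖fderiv ℝ u₂ x‖ ^ 4)
        = 2 * (∫ x, ‖fderiv ℝ u₁ x‖ ^ 4) + 2 * ∫ x, ‖fderiv ℝ u₂ x‖ ^ 4 := by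
      rw [integral_add ((int_n4 h₁ k₁).const_mul 2) ((int_n4 h₂ k₂).const_mul 2),
        integral_const_mul, integral_const_mul]
    have g1 := grad4 hcL0.le hlady h₁ k₁
    have g2 := grad4 hcL0.le hlady h₂ k₂
    have m1 : 2 * cL * (∫ x, ‖fderiv ℝ u₁ x‖ ^ 2) * (∫ x, (lap u₁ x) ^ 2)
        ≤ 2 * cL * B * D :=
      mul_le_mul (mul_le_mul_of_nonneg_left hB1 (by positivity)) hD1 nD1 (by positivity)
    have m2 : 2 * cL * (∫ x, ‖fderiv ℝ u₂ x‖ ^ 2) * (∫ x, (lap u₂ x) ^ 2)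
        ≤ 2 * cL * B * D :=
      mul_le_mul (mul_le_mul_of_nonneg_left hB2 (by positivity)) hD2 nD2 (by positivity)
    calc ∫ x, (‖fderiv ℝ u₁ x‖ ^ 2 + ‖fderiv ℝ u₂ x‖ ^ 2) ^ 2
        ≤ ∫ x, (2 * ‖fderiv ℝ u₁ x‖ ^ 4 + 2 * ‖fderiv ℝ u₂ x‖ ^ 4) := h1
      _ = 2 * (∫ x, ‖fderiv ℝ u₁ x‖ ^ 4) + 2 * ∫ x, ‖fderiv ℝ u₂ x‖ ^ 4 := h2
      _ ≤ (8 * cL) * (B * D) := by nlinarith [g1, g2, m1, m2]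
  -- combine
  have sq1 : Real.sqrt (∫ x, (u₁ x ^ 2 + u₂ x ^ 2) ^ 2)
      ≤ Real.sqrt (4 * cL) * (Real.sqrt A * Real.sqrt B) := by
    calc Real.sqrt (∫ x, (u₁ x ^ 2 + u₂ x ^ 2) ^ 2)
        ≤ Real.sqrt ((4 * cL) * (A * B)) := Real.sqrt_le_sqrt hγ
      _ = Real.sqrt (4 * cL) * (Real.sqrt A * Real.sqrt B) := by
          rw [Real.sqrt_mul (by positivity), Real.sqrt_mul hA0]
  have sq2 : Real.sqrt (∫ x, (‖fderiv ℝ u₁ x‖ ^ 2 + ‖fderiv ℝ u₂ x‖ ^ 2) ^ 2)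
      ≤ Real.sqrt (8 * cL) * (Real.sqrt B * Real.sqrt D) := by
    calc Real.sqrt (∫ x, (‖fderiv ℝ u₁ x‖ ^ 2 + ‖fderiv ℝ u₂ x‖ ^ 2) ^ 2)
        ≤ Real.sqrt ((8 * cL) * (B * D)) := Real.sqrt_le_sqrt hδ
      _ = Real.sqrt (8 * cL) * (Real.sqrt B * Real.sqrt D) := by
          rw [Real.sqrt_mul (by positivity), Real.sqrt_mul hB0]
  have hc2 : Real.sqrt (4 * cL) * Real.sqrt (8 * cL) ≤ 8 * cL := by
    rw [← Real.sqrt_mul (by positivity)]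
    calc Real.sqrt (4 * cL * (8 * cL)) ≤ Real.sqrt ((8 * cL) ^ 2) := by
          apply Real.sqrt_le_sqrt
          nlinarith [sq_nonneg cL]
      _ = 8 * cL := Real.sqrt_sq (by positivity)
  have key : X ≤ 16 * cL * (Real.sqrt A * (B * Real.sqrt D)) := by
    have n1 : (0:ℝ) ≤ ∫ x, (u₁ x ^ 2 + u₂ x ^ 2)
        * (‖fderiv ℝ u₁ x‖ ^ 2 + ‖fderiv ℝ u₂ x‖ ^ 2) :=
      integral_nonneg fun x => by positivity
    have s1nn : (0:ℝ) ≤ Real.sqrt (∫ x, (u₁ x ^ 2 + u₂ x ^ 2) ^ 2) := Real.sqrt_nonneg _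
    have s2nn : (0:ℝ) ≤ Real.sqrt (∫ x, (‖fderiv ℝ u₁ x‖ ^ 2 + ‖fderiv ℝ u₂ x‖ ^ 2) ^ 2) :=
      Real.sqrt_nonneg _
    have step : ∫ x, (u₁ x ^ 2 + u₂ x ^ 2) * (‖fderiv ℝ u₁ x‖ ^ 2 + ‖fderiv ℝ u₂ x‖ ^ 2)
        ≤ (Real.sqrt (4 * cL) * (Real.sqrt A * Real.sqrt B))
          * (Real.sqrt (8 * cL) * (Real.sqrt B * Real.sqrt D)) :=
      le_trans hβ (mul_le_mul sq1 sq2 s2nn (by positivity))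
    have ebb : Real.sqrt B * Real.sqrt B = B := Real.mul_self_sqrt hB0
    have final : (Real.sqrt (4 * cL) * (Real.sqrt A * Real.sqrt B))
          * (Real.sqrt (8 * cL) * (Real.sqrt B * Real.sqrt D))
        = (Real.sqrt (4 * cL) * Real.sqrt (8 * cL)) * (Real.sqrt A * (B * Real.sqrt D)) := by
      have e : (Real.sqrt (4 * cL) * (Real.sqrt A * Real.sqrt B))
            * (Real.sqrt (8 * cL) * (Real.sqrt B * Real.sqrt D))
          = (Real.sqrt (4 * cL) * Real.sqrt (8 * cL))
            * (Real.sqrt A * ((Real.sqrt B * Real.sqrt B) * Real.sqrt D)) := by ring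
      rw [e, ebb]
    have last : (Real.sqrt (4 * cL) * Real.sqrt (8 * cL)) * (Real.sqrt A * (B * Real.sqrt D))
        ≤ (8 * cL) * (Real.sqrt A * (B * Real.sqrt D)) :=
      mul_le_mul_of_nonneg_right hc2 (by positivity)
    linarith [hα, step, last, final.le, final.ge]
  -- take square roots
  have hXs : Real.sqrt X ≤ Real.sqrt (16 * cL * (Real.sqrt A * (B * Real.sqrt D))) :=
    Real.sqrt_le_sqrt key
  have expand : Real.sqrt (16 * cL * (Real.sqrt A * (B * Real.sqrt D)))
      = Real.sqrt (16 * cL)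
        * (Real.sqrt (Real.sqrt A) * (Real.sqrt B * Real.sqrt (Real.sqrt D))) := by
    rw [Real.sqrt_mul (by positivity), Real.sqrt_mul (Real.sqrt_nonneg A),
      Real.sqrt_mul hB0]
  have eA : Real.sqrt (Real.sqrt A) = (Real.sqrt A) ^ ((1:ℝ)/2) := Real.sqrt_eq_rpow _
  have eD : Real.sqrt (Real.sqrt D) = (Real.sqrt D) ^ ((1:ℝ)/2) := Real.sqrt_eq_rpow _
  calc Real.sqrt X ≤ Real.sqrt (16 * cL * (Real.sqrt A * (B * Real.sqrt D))) := hXs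
    _ = Real.sqrt (16 * cL) * (Real.sqrt A) ^ ((1:ℝ)/2) * Real.sqrt B
        * (Real.sqrt D) ^ ((1:ℝ)/2) := by
        rw [expand, eA, eD]; ring
end

section
/- Let u₁, a, b : ℝ² → ℝ be smooth compactly supported functions satisfying the divergence-free relation ∂_x a + ∂_y b = 0. Then ∫_{ℝ²} (∂_x u₁) · a² dx = −2 ∫_{ℝ²} a · (∂_y u₁) · b dx − 2 ∫_{ℝ²} u₁ · (∂_y a) · b dx. -/
open MeasureTheory

namespace J1aAux

abbrev E := EuclideanSpace ℝ (Fin 2)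

lemma cont_pd {f : E → ℝ} (hf : ContDiff ℝ (⊤ : ℕ∞) f) (i : Fin 2) :
    Continuous fun x => pd i f x :=
  (hf.continuous_fderiv (by simp)).clm_apply continuous_const

lemma integrable_mul_cs {f g : E → ℝ} (hf : Continuous f) (hg : Continuous g)
    (hcg : HasCompactSupport g) : Integrable (fun x => f x * g x) :=
  (hf.mul hg).integrable_of_hasCompactSupport hcg.mul_left

lemma pd_mul {f g : E → ℝ} (hf : ContDiff ℝ (⊤ : ℕ∞) f) (hg : ContDiff ℝ (⊤ : ℕ∞) g) (i : Fin 2) (x : E) :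
    pd i (fun y => f y * g y) x = pd i f x * g x + f x * pd i g x := by
  unfold pd
  rw [fderiv_fun_mul (hf.differentiable (by simp) x) (hg.differentiable (by simp) x)]
  simp only [ContinuousLinearMap.add_apply, ContinuousLinearMap.smul_apply, smul_eq_mul]; ring

/-- IBP: `∫ f * pd i g = - ∫ pd i f * g` for smooth compactly supported f, g. -/
lemma ibp {f g : E → ℝ} (hf : ContDiff ℝ (⊤ : ℕ∞) f) (hg : ContDiff ℝ (⊤ : ℕ∞) g)
    (hcf : HasCompactSupport f) (hcg : HasCompactSupport g) (i : Fin 2) :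
    ∫ x, f x * pd i g x = - ∫ x, pd i f x * g x := by
  apply integral_mul_fderiv_eq_neg_fderiv_mul_of_integrable
  · exact integrable_mul_cs (cont_pd hf i) hg.continuous hcg
  · exact (integrable_mul_cs (cont_pd hg i) hf.continuous hcf).congr
      (Filter.Eventually.of_forall fun x => by unfold pd; ring)
  · exact integrable_mul_cs hf.continuous hg.continuous hcg
  · exact fun x _ => hf.differentiable (by simp) x
  · exact fun x _ => hg.differentiable (by simp) x

end J1aAux

open J1aAux in
/-- Integration-by-parts identity for the term `J_{1a}` in the proof of
Theorem 3.2: if `∂_x a + ∂_y b = 0`, then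
`∫ (∂_x u₁) a² = -2 ∫ a (∂_y u₁) b - 2 ∫ u₁ (∂_y a) b`. -/
theorem J1a_integration_by_parts
    (u₁ a b : EuclideanSpace ℝ (Fin 2) → ℝ)
    (hu₁ : ContDiff ℝ (⊤ : ℕ∞) u₁) (ha : ContDiff ℝ (⊤ : ℕ∞) a) (hb : ContDiff ℝ (⊤ : ℕ∞) b)
    (hcu₁ : HasCompactSupport u₁) (hca : HasCompactSupport a)
    (hcb : HasCompactSupport b)
    (hdiv : ∀ x, pd 0 a x + pd 1 b x = 0) :
    ∫ x, pd 0 u₁ x * (a x) ^ 2 =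
      -2 * (∫ x, a x * pd 1 u₁ x * b x) - 2 * (∫ x, u₁ x * pd 1 a x * b x) := by
  have haa : ContDiff ℝ (⊤ : ℕ∞) (fun x => a x * a x) := ha.mul ha
  have hcaa : HasCompactSupport (fun x => a x * a x) := hca.mul_left
  have hu₁a : ContDiff ℝ (⊤ : ℕ∞) (fun x => u₁ x * a x) := hu₁.mul ha
  have hcu₁a : HasCompactSupport (fun x => u₁ x * a x) := hca.mul_left
  -- Step 1: ∫ pd 0 u₁ * a² = 2 ∫ (u₁ a) * pd 1 b
  have e1 : ∫ x, u₁ x * pd 0 (fun y => a y * a y) x = - ∫ x, pd 0 u₁ x * (a x * a x) :=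
    ibp hu₁ haa hcu₁ hcaa 0
  have e2 : ∀ x, u₁ x * pd 0 (fun y => a y * a y) x = -2 * (u₁ x * a x * pd 1 b x) := by
    intro x
    have hx : pd 0 a x = - pd 1 b x := by linarith [hdiv x]
    rw [pd_mul ha ha 0 x, hx]; ring
  rw [integral_congr_ae (Filter.Eventually.of_forall e2), integral_const_mul] at e1
  have h1 : ∫ x, pd 0 u₁ x * (a x) ^ 2 = 2 * ∫ x, u₁ x * a x * pd 1 b x := by
    have : ∫ x, pd 0 u₁ x * (a x) ^ 2 = ∫ x, pd 0 u₁ x * (a x * a x) :=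
      integral_congr_ae (Filter.Eventually.of_forall fun x => by unfold pd; ring)
    rw [this]; linarith
  -- Step 2: IBP in direction 1 with f = u₁ * a, g = b
  have e3 : ∫ x, (u₁ x * a x) * pd 1 b x = - ∫ x, pd 1 (fun y => u₁ y * a y) x * b x :=
    ibp hu₁a hb hcu₁a hcb 1
  have e4 : ∀ x, pd 1 (fun y => u₁ y * a y) x * b x =
      a x * pd 1 u₁ x * b x + u₁ x * pd 1 a x * b x := by
    intro x; rw [pd_mul hu₁ ha 1 x]; ring
  rw [integral_congr_ae (Filter.Eventually.of_forall e4)] at e3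
  have hi1 : Integrable (fun x => a x * pd 1 u₁ x * b x) :=
    integrable_mul_cs (ha.continuous.mul (cont_pd hu₁ 1)) hb.continuous hcb
  have hi2 : Integrable (fun x => u₁ x * pd 1 a x * b x) :=
    integrable_mul_cs (hu₁.continuous.mul (cont_pd ha 1)) hb.continuous hcb
  rw [integral_add hi1 hi2] at e3
  have e5 : ∫ x, u₁ x * a x * pd 1 b x = ∫ x, (u₁ x * a x) * pd 1 b x := rfl
  rw [h1, e5, e3]; ring
end
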